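/- arXiv:2007.02451 — 4 statements merged into one kernel-verified Lean document; each statement's English description precedes it below -/
import Mathlib

section
/- If T satisfies property (UW_Π) and Π_a(T) ∩ σ_uw(T) = ∅, then T satisfies property (Z_{Π_a}). In particular, property (Z_{Π_a}) holds for T whenever T satisfies (UW_Π) and σ_uw(T) = σ_ubw(T). -/
namespace OpSpec

variable {X : Type*} [NormedAddCommGroup X] [NormedSpace ℂ X]

noncomputable section

/-- α(S): the dimension of the kernel of `S`. -/
def alpha (S : X →L[ℂ] X) : Cardinal := Module.rank ℂ (LinearMap.ker (S : X →ₗ[ℂ] X))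

/-- β(S): the codimension of the range of `S`. -/
def beta (S : X →L[ℂ] X) : Cardinal := Module.rank ℂ (X ⧸ LinearMap.range (S : X →ₗ[ℂ] X))

/-- `S` is bounded below (injective with closed range). -/
def boundedBelow (S : X →L[ℂ] X) : Prop := ∃ c > 0, ∀ x : X, c * ‖x‖ ≤ ‖S x‖

/-- finite ascent: p(S) < ∞. -/
def finAsc (S : X →L[ℂ] X) : Prop :=
  ∃ n : ℕ, LinearMap.ker ((S ^ n : X →L[ℂ] X) : X →ₗ[ℂ] X) = LinearMap.ker ((S ^ (n + 1) : X →L[ℂ] X) : X →ₗ[ℂ] X)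

/-- finite descent: q(S) < ∞. -/
def finDesc (S : X →L[ℂ] X) : Prop :=
  ∃ n : ℕ, LinearMap.range ((S ^ n : X →L[ℂ] X) : X →ₗ[ℂ] X) = LinearMap.range ((S ^ (n + 1) : X →L[ℂ] X) : X →ₗ[ℂ] X)

/-- upper semi-Weyl operator: upper semi-Fredholm with index ≤ 0. -/
def isUSW (S : X →L[ℂ] X) : Prop :=
  alpha S < Cardinal.aleph0 ∧ IsClosed (LinearMap.range (S : X →ₗ[ℂ] X) : Set X) ∧ alpha S ≤ beta S

/-- Weyl operator: Fredholm with index 0. -/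
def isWeyl (S : X →L[ℂ] X) : Prop :=
  alpha S < Cardinal.aleph0 ∧ beta S < Cardinal.aleph0 ∧
    IsClosed (LinearMap.range (S : X →ₗ[ℂ] X) : Set X) ∧ alpha S = beta S

/-- left Drazin invertible: finite ascent p with R(S^{p+1}) closed. -/
def isLD (S : X →L[ℂ] X) : Prop :=
  ∃ p : ℕ, LinearMap.ker ((S ^ p : X →L[ℂ] X) : X →ₗ[ℂ] X) = LinearMap.ker ((S ^ (p + 1) : X →L[ℂ] X) : X →ₗ[ℂ] X) ∧
    IsClosed (LinearMap.range ((S ^ (p + 1) : X →L[ℂ] X) : X →ₗ[ℂ] X) : Set X)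

/-- upper semi-Weyl condition for a (not necessarily continuous) linear map. -/
def uswLin {Y : Type*} [NormedAddCommGroup Y] [Module ℂ Y] (S : Y →ₗ[ℂ] Y) : Prop :=
  Module.rank ℂ (LinearMap.ker S) < Cardinal.aleph0 ∧
    IsClosed (LinearMap.range S : Set Y) ∧
    Module.rank ℂ (LinearMap.ker S) ≤ Module.rank ℂ (Y ⧸ LinearMap.range S)

/-- upper semi-B-Weyl: for some n, R(S^n) is closed and the restriction of S to R(S^n)
is upper semi-Weyl. -/
def isUSBW (S : X →L[ℂ] X) : Prop :=
  ∃ n : ℕ, IsClosed (LinearMap.range ((S ^ n : X →L[ℂ] X) : X →ₗ[ℂ] X) : Set X) ∧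
    ∀ h : ∀ x ∈ LinearMap.range ((S ^ n : X →L[ℂ] X) : X →ₗ[ℂ] X), (S : X →ₗ[ℂ] X) x ∈ LinearMap.range ((S ^ n : X →L[ℂ] X) : X →ₗ[ℂ] X),
      uswLin ((S : X →ₗ[ℂ] X).restrict h)

variable (T : X →L[ℂ] X)

/-- the spectrum σ(T). -/
def spec : Set ℂ := spectrum ℂ T

/-- the approximate point spectrum σ_a(T). -/
def specA : Set ℂ := {l | ¬ boundedBelow (T - l • 1)}

/-- the point spectrum (eigenvalues) σ_p(T). -/
def specP : Set ℂ := {l | ∃ x : X, x ≠ 0 ∧ T x = l • x}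

/-- the Weyl spectrum σ_w(T). -/
def specW : Set ℂ := {l | ¬ isWeyl (T - l • 1)}

/-- the upper semi-Weyl spectrum σ_uw(T). -/
def specUW : Set ℂ := {l | ¬ isUSW (T - l • 1)}

/-- the upper semi-B-Weyl spectrum σ_ubw(T). -/
def specUBW : Set ℂ := {l | ¬ isUSBW (T - l • 1)}

/-- the left Drazin spectrum σ_ld(T). -/
def specLD : Set ℂ := {l | ¬ isLD (T - l • 1)}

/-- the Drazin spectrum σ_d(T). -/
def specD : Set ℂ := {l | ¬ (finAsc (T - l • 1) ∧ finDesc (T - l • 1))}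

/-- the Browder spectrum σ_b(T). -/
def specB : Set ℂ :=
  {l | ¬ (alpha (T - l • 1) < Cardinal.aleph0 ∧ beta (T - l • 1) < Cardinal.aleph0 ∧
      IsClosed (LinearMap.range ((T - l • 1 : X →L[ℂ] X) : X →ₗ[ℂ] X) : Set X) ∧
      finAsc (T - l • 1) ∧ finDesc (T - l • 1))}

/-- isolated points of a subset of ℂ. -/
def isoPts (A : Set ℂ) : Set ℂ := {l ∈ A | ∃ U ∈ nhds l, U ∩ A = {l}}

/-- Π(T): the poles of T. -/
def poles : Set ℂ := {l ∈ spec T | finAsc (T - l • 1) ∧ finDesc (T - l • 1)}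

/-- Π⁰(T): poles of finite rank. -/
def poles0 : Set ℂ := {l ∈ poles T | alpha (T - l • 1) < Cardinal.aleph0}

/-- Π_a(T): the left poles of T. -/
def lpoles : Set ℂ := {l ∈ specA T | isLD (T - l • 1)}

/-- Π_a⁰(T): left poles of finite rank. -/
def lpoles0 : Set ℂ := {l ∈ lpoles T | alpha (T - l • 1) < Cardinal.aleph0}

/-- E(T) = iso σ(T) ∩ σ_p(T). -/
def setE : Set ℂ := isoPts (spec T) ∩ specP T

/-- E⁰(T): isolated eigenvalues of σ(T) of finite multiplicity. -/
def setE0 : Set ℂ := {l ∈ setE T | alpha (T - l • 1) < Cardinal.aleph0}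

/-- E_a(T) = iso σ_a(T) ∩ σ_p(T). -/
def setEa : Set ℂ := isoPts (specA T) ∩ specP T

/-- E_a⁰(T): isolated eigenvalues of σ_a(T) of finite multiplicity. -/
def setEa0 : Set ℂ := {l ∈ setEa T | alpha (T - l • 1) < Cardinal.aleph0}

/-- property (UW_Π): σ_a(T) \ σ_uw(T) = Π(T). -/
def propUWPi : Prop := specA T \ specUW T = poles T

/-- property (UW_E): σ_a(T) \ σ_uw(T) = E(T). -/
def propUWE : Prop := specA T \ specUW T = setE T

/-- property (UW_{E_a}): σ_a(T) \ σ_uw(T) = E_a(T). -/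
def propUWEa : Prop := specA T \ specUW T = setEa T

/-- property (Z_{Π_a}): σ(T) \ σ_w(T) = Π_a(T). -/
def propZPia : Prop := spec T \ specW T = lpoles T

/-- property (Z_{E_a}): σ(T) \ σ_w(T) = E_a(T). -/
def propZEa : Prop := spec T \ specW T = setEa T

/-- property (gb): σ_a(T) \ σ_ubw(T) = Π(T). -/
def propGb : Prop := specA T \ specUBW T = poles T

/-- a-Browder's theorem: σ_a(T) \ σ_uw(T) = Π_a⁰(T). -/
def aBrowder : Prop := specA T \ specUW T = lpoles0 T

end
end OpSpec

open OpSpec Cardinal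

namespace OpAux

variable {X : Type*} [NormedAddCommGroup X] [NormedSpace ℂ X]

lemma pow_apply_add (S : X →L[ℂ] X) (a b : ℕ) (x : X) :
    (S ^ (a + b)) x = (S ^ a) ((S ^ b) x) := by
  rw [pow_add, ContinuousLinearMap.mul_apply]

lemma pow_succ_apply (S : X →L[ℂ] X) (n : ℕ) (x : X) :
    (S ^ (n + 1)) x = (S ^ n) (S x) := by
  rw [pow_succ, ContinuousLinearMap.mul_apply]

lemma pow_succ_apply' (S : X →L[ℂ] X) (n : ℕ) (x : X) :
    (S ^ (n + 1)) x = S ((S ^ n) x) := by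
  rw [pow_succ', ContinuousLinearMap.mul_apply]

lemma ker_pow_stab (S : X →L[ℂ] X) {n : ℕ}
    (h : LinearMap.ker (S ^ n).toLinearMap = LinearMap.ker (S ^ (n+1)).toLinearMap) (m : ℕ) :
    LinearMap.ker (S ^ (n + m)).toLinearMap = LinearMap.ker (S ^ n).toLinearMap := by
  induction m with
  | zero => rfl
  | succ m ih =>
    ext x
    simp only [LinearMap.mem_ker, ContinuousLinearMap.coe_coe] at *
    constructor
    · intro hx
      have h1 : (S ^ (n+1)) ((S ^ m) x) = 0 := by
        rw [← pow_apply_add]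
        rw [show n + 1 + m = n + (m+1) by ring]
        exact hx
      have h2 : (S ^ m) x ∈ LinearMap.ker (S ^ (n+1)).toLinearMap := h1
      rw [← h] at h2
      have h3 : (S ^ (n + m)) x = 0 := by
        rw [pow_apply_add]; exact h2
      exact ih.le h3
    · intro hx
      have e : (S ^ (n + (m+1))) x = (S ^ (m+1)) ((S ^ n) x) := by
        rw [← pow_apply_add, add_comm n (m+1)]
      rw [e, hx, map_zero]

lemma range_pow_stab (S : X →L[ℂ] X) {n : ℕ}
    (h : LinearMap.range (S ^ n).toLinearMap = LinearMap.range (S ^ (n+1)).toLinearMap) (m : ℕ) :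
    LinearMap.range (S ^ (n + m)).toLinearMap = LinearMap.range (S ^ n).toLinearMap := by
  induction m with
  | zero => rfl
  | succ m ih =>
    ext y
    simp only [LinearMap.mem_range, ContinuousLinearMap.coe_coe] at *
    constructor
    · rintro ⟨x, rfl⟩
      have e1 : (S ^ (n + (m+1))) x = (S ^ (n+1)) ((S ^ m) x) := by
        rw [← pow_apply_add, show n + 1 + m = n + (m+1) by ring]
      have h1 : (S ^ (n+1)) ((S ^ m) x) ∈ LinearMap.range (S ^ (n+1)).toLinearMap := ⟨(S ^ m) x, rfl⟩
      rw [← h] at h1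
      obtain ⟨u, hu⟩ := h1
      exact ⟨u, by rw [e1]; exact hu⟩
    · rintro ⟨u, rfl⟩
      have h1 : (S ^ n) u ∈ LinearMap.range (S ^ n).toLinearMap := ⟨u, rfl⟩
      rw [h] at h1
      obtain ⟨v, hv⟩ := h1
      have h2 : (S ^ n) v ∈ LinearMap.range (S ^ n).toLinearMap := ⟨v, rfl⟩
      rw [← ih] at h2
      obtain ⟨w, hw⟩ := h2
      refine ⟨w, ?_⟩
      have e1 : (S ^ (n + (m+1))) w = S ((S ^ (n+m)) w) := by
        rw [show n + (m+1) = (n + m) + 1 by ring, pow_succ_apply']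
      have e2 : (S ^ (n+1)) v = S ((S ^ n) v) := pow_succ_apply' S n v
      rw [e1, ← ContinuousLinearMap.coe_coe (S ^ (n+m)), hw, ← e2, ← ContinuousLinearMap.coe_coe (S ^ (n+1)), hv]

lemma range_pow_succ_le (S : X →L[ℂ] X) (n : ℕ) :
    LinearMap.range (S ^ (n+1)).toLinearMap ≤ LinearMap.range (S ^ n).toLinearMap := by
  rintro _ ⟨x, rfl⟩
  exact ⟨S x, (pow_succ_apply S n x).symm⟩

lemma rank_ker_pow_lt (S : X →L[ℂ] X)
    (hk : Module.rank ℂ (LinearMap.ker S.toLinearMap) < ℵ₀) (n : ℕ) :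
    Module.rank ℂ (LinearMap.ker (S ^ n).toLinearMap) < ℵ₀ := by
  induction n with
  | zero =>
    have h0 : LinearMap.ker (S ^ 0).toLinearMap = (⊥ : Submodule ℂ X) := by
      ext x
      simp [pow_zero, LinearMap.mem_ker, ContinuousLinearMap.one_apply]
    rw [h0, rank_bot]
    exact aleph0_pos
  | succ n ih =>
    set f : (LinearMap.ker (S ^ (n+1)).toLinearMap : Submodule ℂ X) →ₗ[ℂ] X :=
      (S : X →ₗ[ℂ] X).comp (LinearMap.ker (S ^ (n+1)).toLinearMap).subtype with hf
    have h1 : Module.rank ℂ (LinearMap.range f) + Module.rank ℂ (LinearMap.ker f)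
        = Module.rank ℂ (LinearMap.ker (S ^ (n+1)).toLinearMap) := LinearMap.rank_range_add_rank_ker f
    have h2 : Module.rank ℂ (LinearMap.range f) < ℵ₀ := by
      refine lt_of_le_of_lt (Submodule.rank_mono
        (show LinearMap.range f ≤ LinearMap.ker (S ^ n).toLinearMap from ?_)) ih
      rintro _ ⟨⟨x, hx⟩, rfl⟩
      have hx' : (S ^ (n+1)) x = 0 := hx
      show (S ^ n) (S x) = 0
      rw [← pow_succ_apply]
      exact hx'
    have h3 : Module.rank ℂ (LinearMap.ker f) < ℵ₀ := by
      have hmem : ∀ c : LinearMap.ker f,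
          ((LinearMap.ker (S ^ (n+1)).toLinearMap).subtype.comp (LinearMap.ker f).subtype) c
            ∈ LinearMap.ker S.toLinearMap := by
        rintro ⟨⟨x, hx⟩, hc⟩
        exact hc
      set φ : (LinearMap.ker f : Submodule ℂ _) →ₗ[ℂ] (LinearMap.ker S.toLinearMap : Submodule ℂ X) :=
        LinearMap.codRestrict (LinearMap.ker S.toLinearMap) _ hmem with hphi
      have hinj : Function.Injective φ := by
        intro a b hab
        apply Subtype.ext
        apply Subtype.ext
        exact congrArg (fun z : (LinearMap.ker S.toLinearMap : Submodule ℂ X) => (z : X)) hab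
      exact lt_of_le_of_lt (LinearMap.rank_le_of_injective φ hinj) hk
    rw [← h1]
    exact add_lt_aleph0 h2 h3

lemma rank_quot_pow_lt (S : X →L[ℂ] X)
    (hq : Module.rank ℂ (X ⧸ LinearMap.range S.toLinearMap) < ℵ₀) (n : ℕ) :
    Module.rank ℂ (X ⧸ LinearMap.range (S ^ n).toLinearMap) < ℵ₀ := by
  induction n with
  | zero =>
    have h0 : LinearMap.range (S ^ 0).toLinearMap = (⊤ : Submodule ℂ X) := by
      ext x
      simp only [Submodule.mem_top, iff_true, LinearMap.mem_range]
      exact ⟨x, by simp [pow_zero, ContinuousLinearMap.one_apply]⟩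
    rw [h0]
    haveI : Subsingleton (X ⧸ (⊤ : Submodule ℂ X)) :=
      Submodule.Quotient.subsingleton_iff.mpr rfl
    rw [rank_zero_iff.mpr this]
    exact aleph0_pos
  | succ n ih =>
    set R0 := LinearMap.range (S ^ n).toLinearMap with hR0
    set R1 := LinearMap.range (S ^ (n+1)).toLinearMap with hR1
    have hR1R0 : R1 ≤ R0 := range_pow_succ_le S n
    set π : (X ⧸ R1) →ₗ[ℂ] X ⧸ R0 :=
      Submodule.liftQ R1 R0.mkQ (by rw [Submodule.ker_mkQ]; exact hR1R0) with hπ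
    have hπs : Function.Surjective π := by
      intro z
      obtain ⟨x, rfl⟩ := R0.mkQ_surjective z
      exact ⟨Submodule.Quotient.mk x, rfl⟩
    set ρ : X →ₗ[ℂ] X ⧸ R1 := R1.mkQ.comp ((S ^ n : X →L[ℂ] X) : X →ₗ[ℂ] X) with hρ
    have hker : LinearMap.ker π = LinearMap.range ρ := by
      ext z
      obtain ⟨x, rfl⟩ := R1.mkQ_surjective z
      constructor
      · intro hz
        have hx : x ∈ R0 := by
          have h0 : R0.mkQ x = 0 := hz
          rw [Submodule.mkQ_apply] at h0
          exact (Submodule.Quotient.mk_eq_zero R0).mp h0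
        obtain ⟨u, hu⟩ := hx
        exact ⟨u, by rw [← hu]; rfl⟩
      · rintro ⟨u, hu⟩
        have : (Submodule.Quotient.mk ((S ^ n) u) : X ⧸ R1) = Submodule.Quotient.mk x := hu
        rw [Submodule.Quotient.eq] at this
        have hx : x ∈ R0 := by
          have h1 : (S ^ n) u - x ∈ R0 := hR1R0 this
          have h2 : (S ^ n) u ∈ R0 := ⟨u, rfl⟩
          have := sub_mem h2 h1
          simpa using this
        show π (R1.mkQ x) = 0
        have : R0.mkQ x = 0 := (Submodule.Quotient.mk_eq_zero R0).mpr hx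
        exact this
    have hρ0 : LinearMap.range S.toLinearMap ≤ LinearMap.ker ρ := by
      rintro _ ⟨y, rfl⟩
      show ρ (S y) = 0
      have e : (S ^ n) (S y) = (S ^ (n+1)) y := (pow_succ_apply S n y).symm
      have : ρ (S y) = R1.mkQ ((S ^ (n+1)) y) := by rw [← e]; rfl
      rw [this]
      exact (Submodule.Quotient.mk_eq_zero R1).mpr ⟨y, rfl⟩
    set ρ' : (X ⧸ LinearMap.range S.toLinearMap) →ₗ[ℂ] X ⧸ R1 :=
      Submodule.liftQ _ ρ hρ0 with hρ'
    have hρ'r : LinearMap.range ρ' = LinearMap.range ρ := Submodule.range_liftQ _ _ _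
    have hkerlt : Module.rank ℂ (LinearMap.ker π) < ℵ₀ := by
      rw [hker, ← hρ'r]
      exact lt_of_le_of_lt (rank_range_le ρ') hq
    have h1 := LinearMap.rank_range_add_rank_ker π
    have h2 : LinearMap.range π = ⊤ := LinearMap.range_eq_top.mpr hπs
    rw [h2, rank_top] at h1
    rw [← h1]
    exact add_lt_aleph0 ih hkerlt


lemma beta_eq_alpha_of_pole (S : X →L[ℂ] X)
    (hα : Module.rank ℂ (LinearMap.ker S.toLinearMap) < ℵ₀)
    {na : ℕ} (hna : LinearMap.ker (S ^ na).toLinearMap = LinearMap.ker (S ^ (na+1)).toLinearMap)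
    {nd : ℕ} (hnd : LinearMap.range (S ^ nd).toLinearMap = LinearMap.range (S ^ (nd+1)).toLinearMap) :
    Module.rank ℂ (X ⧸ LinearMap.range S.toLinearMap) = Module.rank ℂ (LinearMap.ker S.toLinearMap) := by
  classical
  set P : ℕ := na + nd + 1 with hP
  have hkstab : ∀ m, LinearMap.ker (S ^ (P + m)).toLinearMap = LinearMap.ker (S ^ P).toLinearMap := by
    intro m
    have e1 := ker_pow_stab S hna (nd + 1)        -- ker S^(na+(nd+1)) = ker S^na
    have e2 := ker_pow_stab S hna (nd + 1 + m)    -- ker S^(na+(nd+1+m)) = ker S^na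
    have eP : P + m = na + (nd + 1 + m) := by rw [hP]; ring
    rw [eP, e2, show P = na + (nd+1) by rw [hP]; ring, e1]
  have hrstab : ∀ m, LinearMap.range (S ^ (P + m)).toLinearMap = LinearMap.range (S ^ P).toLinearMap := by
    intro m
    have e1 := range_pow_stab S hnd (na + 1)
    have e2 := range_pow_stab S hnd (na + 1 + m)
    have eP : P + m = nd + (na + 1 + m) := by rw [hP]; ring
    rw [eP, e2, show P = nd + (na+1) from by rw [hP]; ring, e1]
  set N : Submodule ℂ X := LinearMap.ker (S ^ P).toLinearMap with hN
  set M : Submodule ℂ X := LinearMap.range (S ^ P).toLinearMap with hM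
  have hdisj : Disjoint N M := by
    rw [Submodule.disjoint_def]
    rintro x hxN ⟨y, rfl⟩
    have h1 : (S ^ (P + P)) y = 0 := by
      rw [pow_apply_add]; exact hxN
    have h2 : y ∈ LinearMap.ker (S ^ (P + P)).toLinearMap := h1
    rw [hkstab P] at h2
    exact h2
  have hsup : N ⊔ M = ⊤ := by
    rw [eq_top_iff]
    intro x _
    have h1 : (S ^ P) x ∈ LinearMap.range (S ^ (P + P)).toLinearMap := by
      rw [hrstab P]; exact ⟨x, rfl⟩
    obtain ⟨y, hy⟩ := h1
    have hy' : (S ^ P) ((S ^ P) y) = (S ^ P) x := by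
      rw [← pow_apply_add]; exact hy
    refine Submodule.mem_sup.mpr ⟨x - (S ^ P) y, ?_, (S ^ P) y, ⟨y, rfl⟩, by abel⟩
    show (S ^ P) (x - (S ^ P) y) = 0
    rw [map_sub, hy', sub_self]
  have hNfin : Module.rank ℂ N < ℵ₀ := rank_ker_pow_lt S hα P
  have hkerle : LinearMap.ker S.toLinearMap ≤ N := by
    intro x hx
    have hx' : S x = 0 := hx
    show (S ^ P) x = 0
    rw [show P = (na + nd) + 1 from rfl, pow_succ_apply, hx', map_zero]
  have hSN : ∀ x ∈ N, S x ∈ N := by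
    intro x hx
    show (S ^ P) (S x) = 0
    rw [← pow_succ_apply]
    exact (hkstab 1).ge hx
  have hMle : M ≤ LinearMap.range S.toLinearMap := by
    rintro _ ⟨u, rfl⟩
    exact ⟨(S ^ (na + nd)) u, (pow_succ_apply' S (na + nd) u).symm⟩
  have hSM : ∀ x ∈ M, S x ∈ M := by
    rintro _ ⟨u, rfl⟩
    have : S ((S ^ P) u) = (S ^ (P + 1)) u := (pow_succ_apply' S P u).symm
    rw [ContinuousLinearMap.coe_coe, this]
    have h1 : (S ^ (P+1)) u ∈ LinearMap.range (S ^ (P+1)).toLinearMap := ⟨u, rfl⟩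
    rw [hrstab 1] at h1
    exact h1
  -- the surjection N → X ⧸ range S
  set f : N →ₗ[ℂ] (X ⧸ LinearMap.range S.toLinearMap) :=
    (LinearMap.range S.toLinearMap).mkQ.comp N.subtype with hf
  have hfs : Function.Surjective f := by
    intro z
    obtain ⟨x, rfl⟩ := (LinearMap.range S.toLinearMap).mkQ_surjective z
    have hx : x ∈ N ⊔ M := by rw [hsup]; exact Submodule.mem_top
    obtain ⟨n, hn, m, hm, hsum⟩ := Submodule.mem_sup.mp hx
    refine ⟨⟨n, hn⟩, ?_⟩
    show (LinearMap.range S.toLinearMap).mkQ n = (LinearMap.range S.toLinearMap).mkQ x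
    rw [Submodule.mkQ_apply, Submodule.mkQ_apply, Submodule.Quotient.eq]
    have : n - x = -m := by rw [← hsum]; abel
    rw [this]
    exact neg_mem (hMle hm)
  set g : N →ₗ[ℂ] N := (S : X →ₗ[ℂ] X).restrict hSN with hg
  have hgapp : ∀ x : N, (g x : X) = S (x : X) := fun x => rfl
  have hkf : LinearMap.ker f = LinearMap.range g := by
    ext n
    constructor
    · intro hn
      have hn' : (n : X) ∈ LinearMap.range S.toLinearMap := by
        have : (LinearMap.range S.toLinearMap).mkQ (n : X) = 0 := hn
        rw [Submodule.mkQ_apply] at this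
        exact (Submodule.Quotient.mk_eq_zero _).mp this
      obtain ⟨y, hy⟩ := hn'
      have hyd : y ∈ N ⊔ M := by rw [hsup]; exact Submodule.mem_top
      obtain ⟨n', hn'', m', hm', hsum⟩ := Submodule.mem_sup.mp hyd
      have hSm' : S m' ∈ M := hSM m' hm'
      have hSn' : S n' ∈ N := hSN n' hn''
      have hdiff : (n : X) - S n' ∈ N ⊓ M := by
        constructor
        · exact sub_mem n.2 hSn'
        · have : (n : X) - S n' = S m' := by
            rw [← hy, ← hsum, map_add]; simp only [ContinuousLinearMap.coe_coe]; abel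
          rw [this]; exact hSm'
      rw [hdisj.eq_bot] at hdiff
      have hzero : (n : X) - S n' = 0 := hdiff
      refine ⟨⟨n', hn''⟩, ?_⟩
      apply Subtype.ext
      rw [hgapp]
      have : S n' = (n : X) := by
        have := sub_eq_zero.mp hzero
        exact this.symm
      exact this
    · rintro ⟨x, rfl⟩
      show (LinearMap.range S.toLinearMap).mkQ (g x : X) = 0
      rw [hgapp, Submodule.mkQ_apply]
      exact (Submodule.Quotient.mk_eq_zero _).mpr ⟨(x : X), rfl⟩
  have hkg : LinearMap.ker g = Submodule.comap N.subtype (LinearMap.ker S.toLinearMap) := by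
    ext x
    constructor
    · intro hx
      have : (g x : X) = 0 := by rw [show g x = 0 from hx]; rfl
      rw [hgapp] at this
      exact this
    · intro hx
      apply Subtype.ext
      rw [hgapp]
      exact hx
  have h1 : Module.rank ℂ (N ⧸ LinearMap.ker f) + Module.rank ℂ (LinearMap.ker f)
      = Module.rank ℂ N := Submodule.rank_quotient_add_rank (LinearMap.ker f)
  have h2 : Module.rank ℂ (LinearMap.range g) + Module.rank ℂ (LinearMap.ker g)
      = Module.rank ℂ N := LinearMap.rank_range_add_rank_ker g
  have h3 : Module.rank ℂ (X ⧸ LinearMap.range S.toLinearMap) = Module.rank ℂ (N ⧸ LinearMap.ker f) :=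
    (LinearEquiv.rank_eq (f.quotKerEquivOfSurjective hfs)).symm
  have h4 : Module.rank ℂ (LinearMap.ker g) = Module.rank ℂ (LinearMap.ker S.toLinearMap) := by
    rw [hkg]
    exact LinearEquiv.rank_eq (Submodule.comapSubtypeEquivOfLe hkerle)
  have hbfin : Module.rank ℂ (LinearMap.range g) < ℵ₀ :=
    lt_of_le_of_lt (rank_range_le g) hNfin
  have h5 : Module.rank ℂ (N ⧸ LinearMap.ker f) + Module.rank ℂ (LinearMap.range g)
      = Module.rank ℂ (LinearMap.ker S.toLinearMap) + Module.rank ℂ (LinearMap.range g) := by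
    rw [← hkf] at *
    rw [h1]
    rw [← h4, add_comm]
    rw [hkf]
    exact h2.symm
  have h6 := Cardinal.eq_of_add_eq_add_right h5 hbfin
  rw [h3, h6]

section Banach
variable [CompleteSpace X]

lemma closed_range_of_finite_codim (A : X →L[ℂ] X)
    (hq : Module.rank ℂ (X ⧸ LinearMap.range A.toLinearMap) < ℵ₀) :
    IsClosed (LinearMap.range A.toLinearMap : Set X) := by
  classical
  obtain ⟨F, hF⟩ := Submodule.exists_isCompl (LinearMap.range A.toLinearMap)
  haveI : Module.Finite ℂ (X ⧸ LinearMap.range A.toLinearMap) := by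
    rwa [← Module.rank_lt_aleph0_iff]
  haveI : FiniteDimensional ℂ F :=
    Module.Finite.equiv (Submodule.quotientEquivOfIsCompl _ F hF)
  haveI hFc : CompleteSpace F := FiniteDimensional.complete ℂ F
  set K : Submodule ℂ X := LinearMap.ker A.toLinearMap with hK
  haveI hKc : IsClosed (K : Set X) := ContinuousLinearMap.isClosed_ker A
  set ℓ₀ : (X ⧸ K) →ₗ[ℂ] X :=
    Submodule.liftQ K (A : X →ₗ[ℂ] X) (fun x hx => hx) with hℓ₀
  have hcont : Continuous ℓ₀ := by
    rw [(Submodule.isOpenQuotientMap_mkQ K).isQuotientMap.continuous_iff]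
    have he : (ℓ₀ ∘ K.mkQ) = A := by ext x; rfl
    rw [he]
    exact A.continuous
  set ℓ : (X ⧸ K) →L[ℂ] X := ⟨ℓ₀, hcont⟩ with hℓ
  have hℓr : ∀ q : X ⧸ K, ℓ q ∈ LinearMap.range A.toLinearMap := by
    intro q
    obtain ⟨x, rfl⟩ := K.mkQ_surjective q
    exact ⟨x, rfl⟩
  set g : ((X ⧸ K) × F) →L[ℂ] X :=
    ℓ.comp (ContinuousLinearMap.fst ℂ (X ⧸ K) F) +
      F.subtypeL.comp (ContinuousLinearMap.snd ℂ (X ⧸ K) F) with hg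
  have hgapp : ∀ (q : X ⧸ K) (f : F), g (q, f) = ℓ q + (f : X) := fun q f => rfl
  have hginj : LinearMap.ker g.toLinearMap = ⊥ := by
    rw [LinearMap.ker_eq_bot']
    rintro ⟨q, f⟩ hqf
    rw [ContinuousLinearMap.coe_coe, hgapp] at hqf
    have h1 : ℓ q = -(f : X) := by linear_combination (norm := module) hqf
    have h2 : ℓ q ∈ LinearMap.range A.toLinearMap ⊓ F := by
      constructor
      · exact hℓr q
      · rw [h1]; exact neg_mem f.2
    rw [hF.inf_eq_bot] at h2
    have h3 : ℓ q = 0 := h2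
    have h4 : (f : X) = 0 := by rw [h1] at h3; simpa using h3
    obtain ⟨x, rfl⟩ := K.mkQ_surjective q
    have h5 : A x = 0 := h3
    have h6 : K.mkQ x = 0 := (Submodule.Quotient.mk_eq_zero K).mpr h5
    rw [Prod.mk_eq_zero]
    exact ⟨h6, Subtype.ext h4⟩
  have hgsurj : LinearMap.range g.toLinearMap = ⊤ := by
    rw [LinearMap.range_eq_top]
    intro x
    have hx : x ∈ LinearMap.range A.toLinearMap ⊔ F := by rw [hF.sup_eq_top]; exact Submodule.mem_top
    obtain ⟨y, hy, z, hz, rfl⟩ := Submodule.mem_sup.mp hx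
    obtain ⟨u, rfl⟩ := hy
    exact ⟨(K.mkQ u, ⟨z, hz⟩), rfl⟩
  set e := ContinuousLinearEquiv.ofBijective g hginj hgsurj with he
  have himg : (LinearMap.range A.toLinearMap : Set X) = e '' (Set.univ ×ˢ ({0} : Set F)) := by
    ext y
    constructor
    · rintro ⟨x, rfl⟩
      refine ⟨(K.mkQ x, 0), ⟨trivial, rfl⟩, ?_⟩
      have : e (K.mkQ x, 0) = g (K.mkQ x, 0) := rfl
      rw [this, hgapp]
      simp only [Submodule.coe_zero, add_zero]
      rfl
    · rintro ⟨⟨q, f⟩, ⟨-, hf⟩, rfl⟩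
      have hf0 : f = 0 := hf
      have : e (q, f) = g (q, f) := rfl
      rw [this, hgapp, hf0]
      simpa using hℓr q
  rw [himg]
  exact (e.toHomeomorph.isClosedMap) _ (isClosed_univ.prod isClosed_singleton)

lemma exists_bound_of_closed_range (A : X →L[ℂ] X)
    (hcl : IsClosed (LinearMap.range A.toLinearMap : Set X)) :
    ∃ C > 0, ∀ x : X, ∃ k : X, A k = 0 ∧ ‖x - k‖ ≤ C * ‖A x‖ := by
  haveI : IsClosed ((LinearMap.range A.toLinearMap : Submodule ℂ X) : Set X) := hcl
  haveI : CompleteSpace (LinearMap.range A.toLinearMap : Submodule ℂ X) :=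
    IsClosed.completeSpace_coe (hs := hcl)
  set A' : X →L[ℂ] (LinearMap.range A.toLinearMap : Submodule ℂ X) :=
    A.codRestrict (LinearMap.range A.toLinearMap) (fun x => ⟨x, rfl⟩) with hA'
  have hsurj : Function.Surjective A' := by
    rintro ⟨y, x, rfl⟩
    exact ⟨x, rfl⟩
  obtain ⟨C, hC, hCx⟩ := A'.exists_preimage_norm_le hsurj
  refine ⟨C, hC, fun x => ?_⟩
  obtain ⟨u, hu, hnu⟩ := hCx (A' x)
  refine ⟨x - u, ?_, ?_⟩
  · have : A' u = A' x := hu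
    have h2 : A u = A x := congrArg Subtype.val this
    simp [map_sub, h2]
  · have h3 : ‖A' x‖ = ‖A x‖ := rfl
    simpa [h3] using hnu


lemma closed_range_pow_two_of_LD (S : X →L[ℂ] X) {p : ℕ}
    (hker : LinearMap.ker (S ^ p).toLinearMap = LinearMap.ker (S ^ (p+1)).toLinearMap)
    (hclosed : IsClosed (LinearMap.range (S ^ (p+1)).toLinearMap : Set X)) :
    IsClosed (LinearMap.range (S ^ (p+2)).toLinearMap : Set X) := by
  have hks : ∀ m, LinearMap.ker (S ^ (p + m)).toLinearMap = LinearMap.ker (S ^ p).toLinearMap :=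
    ker_pow_stab S hker
  have stepA : IsClosed
      ((LinearMap.range S.toLinearMap ⊔ LinearMap.ker (S ^ p).toLinearMap : Submodule ℂ X) : Set X) := by
    refine isClosed_of_closure_subset ?_
    intro v hv
    obtain ⟨w, hw, hwt⟩ := mem_closure_iff_seq_limit.mp hv
    have hmem : ∀ j, (S ^ p) (w j) ∈ (LinearMap.range (S ^ (p+1)).toLinearMap : Set X) := by
      intro j
      obtain ⟨y, hy, z, hz, hyz⟩ := Submodule.mem_sup.mp (hw j)
      obtain ⟨a, rfl⟩ := hy
      have hz0 : (S ^ p) z = 0 := hz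
      refine ⟨a, ?_⟩
      calc (S ^ (p+1)) a = (S ^ p) (S a) := pow_succ_apply S p a
        _ = (S ^ p) (S a) + (S ^ p) z := by rw [hz0, add_zero]
        _ = (S ^ p) (S a + z) := (map_add _ _ _).symm
        _ = (S ^ p) (w j) := by exact congrArg (S ^ p) hyz
    have hlim : Filter.Tendsto (fun j => (S ^ p) (w j)) Filter.atTop (nhds ((S ^ p) v)) :=
      ((S ^ p).continuous.tendsto v).comp hwt
    have hSpv : (S ^ p) v ∈ (LinearMap.range (S ^ (p+1)).toLinearMap : Set X) :=
      hclosed.mem_of_tendsto hlim (Filter.Eventually.of_forall hmem)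
    obtain ⟨b, hb⟩ := hSpv
    refine Submodule.mem_sup.mpr ⟨S b, ⟨b, rfl⟩, v - S b, ?_, by abel⟩
    show (S ^ p) (v - S b) = 0
    rw [ContinuousLinearMap.coe_coe] at hb; rw [map_sub, ← pow_succ_apply, hb, sub_self]
  obtain ⟨C, hC, hCb⟩ := exists_bound_of_closed_range (S ^ (p+1)) hclosed
  refine isClosed_of_closure_subset ?_
  intro y hy
  obtain ⟨w, hw, hwt⟩ := mem_closure_iff_seq_limit.mp hy
  choose x hx using hw
  have hyM : y ∈ (LinearMap.range (S ^ (p+1)).toLinearMap : Set X) := by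
    refine hclosed.mem_of_tendsto hwt (Filter.Eventually.of_forall fun j => ?_)
    exact range_pow_succ_le S (p+1) ⟨x j, hx j⟩
  obtain ⟨u, hu⟩ := hyM
  choose k hk0 hkb using fun j => hCb (S (x j) - u)
  have he : ∀ j, (S ^ (p+1)) (S (x j) - u) = w j - y := by
    intro j
    rw [ContinuousLinearMap.coe_coe] at hu hx; rw [map_sub, hu, ← pow_succ_apply, hx]
  have hseq : ∀ j, S (x j) - k j ∈
      ((LinearMap.range S.toLinearMap ⊔ LinearMap.ker (S ^ p).toLinearMap : Submodule ℂ X) : Set X) := by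
    intro j
    have h1 : S (x j) ∈ (LinearMap.range S.toLinearMap ⊔ LinearMap.ker (S ^ p).toLinearMap : Submodule ℂ X) :=
      Submodule.mem_sup_left ⟨x j, rfl⟩
    have h2 : k j ∈ (LinearMap.range S.toLinearMap ⊔ LinearMap.ker (S ^ p).toLinearMap : Submodule ℂ X) := by
      apply Submodule.mem_sup_right
      have : k j ∈ LinearMap.ker (S ^ (p+1)).toLinearMap := hk0 j
      rw [← hks 1]
      exact this
    exact sub_mem h1 h2
  have ht : Filter.Tendsto (fun j => S (x j) - k j) Filter.atTop (nhds u) := by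
    rw [tendsto_iff_norm_sub_tendsto_zero]
    have hb : ∀ j, ‖(S (x j) - k j) - u‖ ≤ C * ‖w j - y‖ := by
      intro j
      have e1 : (S (x j) - k j) - u = (S (x j) - u) - k j := by abel
      rw [e1, ← he j]
      exact hkb j
    have h0 : Filter.Tendsto (fun j => C * ‖w j - y‖) Filter.atTop (nhds 0) := by
      have : Filter.Tendsto (fun j => w j - y) Filter.atTop (nhds 0) := by
        simpa using hwt.sub (tendsto_const_nhds (x := y))
      have hn := this.norm
      simp only [norm_zero] at hn
      simpa using hn.const_mul C
    exact squeeze_zero (fun j => norm_nonneg _) hb h0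
  have huW : u ∈ (LinearMap.range S.toLinearMap ⊔ LinearMap.ker (S ^ p).toLinearMap : Submodule ℂ X) :=
    stepA.mem_of_tendsto ht (Filter.Eventually.of_forall hseq)
  obtain ⟨sb, hsb, n, hn, hsum⟩ := Submodule.mem_sup.mp huW
  obtain ⟨b, rfl⟩ := hsb
  refine ⟨b, ?_⟩
  have hn1 : (S ^ (p+1)) n = 0 := by
    rw [pow_succ_apply' S p n]
    have hn0 : (S ^ p) n = 0 := hn
    rw [hn0, map_zero]
  calc (S ^ (p+2)) b = (S ^ (p+1)) (S b) := pow_succ_apply S (p+1) b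
    _ = (S ^ (p+1)) (S b) + (S ^ (p+1)) n := by rw [hn1, add_zero]
    _ = (S ^ (p+1)) (S b + n) := (map_add _ _ _).symm
    _ = (S ^ (p+1)) u := by exact congrArg (S ^ (p+1)) hsum
    _ = y := hu


lemma not_mem_spec_of_bijective (T : X →L[ℂ] X) (l : ℂ)
    (hinj : LinearMap.ker (T - l • 1).toLinearMap = ⊥) (hsurj : LinearMap.range (T - l • 1).toLinearMap = ⊤) :
    l ∉ spectrum ℂ T := by
  intro hl
  rw [spectrum.mem_iff] at hl
  apply hl
  set e := ContinuousLinearEquiv.ofBijective (T - l • 1) hinj hsurj with he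
  have hco : ⇑e = ⇑(T - l • 1) := by
    rw [he]
    exact ContinuousLinearEquiv.coeFn_ofBijective _ hinj hsurj
  have hu : IsUnit (T - l • 1) := by
    refine isUnit_iff_exists.mpr ⟨(e.symm : X →L[ℂ] X), ?_, ?_⟩
    · ext x
      simp only [ContinuousLinearMap.mul_apply, ContinuousLinearMap.one_apply,
        ContinuousLinearEquiv.coe_coe]
      have h1 : (T - l • 1) (e.symm x) = e (e.symm x) := by rw [hco]
      rw [h1, e.apply_symm_apply]
    · ext x
      simp only [ContinuousLinearMap.mul_apply, ContinuousLinearMap.one_apply,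
        ContinuousLinearEquiv.coe_coe]
      have h1 : (T - l • 1) x = e x := by rw [hco]
      rw [h1, e.symm_apply_apply]
  have halg : algebraMap ℂ (X →L[ℂ] X) l - T = -(T - l • 1) := by
    rw [Algebra.algebraMap_eq_smul_one, neg_sub]
  rw [halg]
  exact hu.neg

end Banach
end OpAux

namespace OpAux
section Main
variable {X : Type*} [NormedAddCommGroup X] [NormedSpace ℂ X] [CompleteSpace X]

lemma isLD_isUSBW (S : X →L[ℂ] X) (hld : OpSpec.isLD S) : OpSpec.isUSBW S := by
  obtain ⟨p, hker, hclosed⟩ := hld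
  have hks : ∀ m, LinearMap.ker (S ^ (p + m)).toLinearMap = LinearMap.ker (S ^ p).toLinearMap :=
    OpAux.ker_pow_stab S hker
  have hclosed2 := OpAux.closed_range_pow_two_of_LD S hker hclosed
  refine ⟨p + 1, hclosed, ?_⟩
  intro hinv
  set g := (S : X →ₗ[ℂ] X).restrict hinv with hg
  have hgapp : ∀ x, ((g x : X)) = S (x : X) := fun _ => rfl
  have hkerbot : LinearMap.ker g = ⊥ := by
    rw [LinearMap.ker_eq_bot']
    intro x hx
    have hx0 : S (x : X) = 0 := by
      have h1 := Subtype.ext_iff.mp hx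
      rw [hgapp] at h1
      exact h1
    obtain ⟨c, hc⟩ := x.2
    have hc2 : (S ^ (p+2)) c = 0 := by
      rw [pow_succ_apply' S (p+1) c, ← ContinuousLinearMap.coe_coe (S ^ (p+1)), hc, hx0]
    have hc3 : c ∈ LinearMap.ker (S ^ (p + 2)).toLinearMap := hc2
    rw [hks 2] at hc3
    have hc4 : c ∈ LinearMap.ker (S ^ (p + 1)).toLinearMap := by rw [hks 1]; exact hc3
    apply Subtype.ext
    show (x : X) = 0
    rw [← hc]
    exact hc4
  refine ⟨?_, ?_, ?_⟩
  · rw [hkerbot, rank_bot]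
    exact Cardinal.aleph0_pos
  · have hset : (LinearMap.range g : Set (LinearMap.range (S ^ (p+1)).toLinearMap)) =
        (Subtype.val) ⁻¹' (LinearMap.range (S ^ (p+2)).toLinearMap : Set X) := by
      ext z
      simp only [Set.mem_preimage, SetLike.mem_coe, LinearMap.mem_range]
      constructor
      · rintro ⟨x, rfl⟩
        obtain ⟨c, hc⟩ := x.2
        refine ⟨c, ?_⟩
        show (S ^ (p+2)) c = (g x : X)
        rw [hgapp, pow_succ_apply' S (p+1) c, ← ContinuousLinearMap.coe_coe (S ^ (p+1)), hc]
      · rintro ⟨c, hc⟩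
        refine ⟨⟨(S ^ (p+1)) c, ⟨c, rfl⟩⟩, ?_⟩
        apply Subtype.ext
        have h9 : (g ⟨(S ^ (p+1)) c, ⟨c, rfl⟩⟩ : X) = S ((S ^ (p+1)) c) := hgapp _
        rw [h9, ← pow_succ_apply' S (p+1) c]
        exact hc
    rw [hset]
    exact hclosed2.preimage continuous_subtype_val
  · rw [hkerbot, rank_bot]
    simp

end Main
end OpAux

open OpSpec Cardinal in
theorem stmt8' {X : Type*} [NormedAddCommGroup X] [NormedSpace ℂ X] [CompleteSpace X]
    (hX : ¬ FiniteDimensional ℂ X) (T : X →L[ℂ] X)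
    (h : propUWPi T) :
    (lpoles T ∩ specUW T = ∅ → propZPia T) ∧ (specUW T = specUBW T → propZPia T) := by
  have hUW : specA T \ specUW T = poles T := h
  have key : lpoles T ∩ specUW T = ∅ → propZPia T := by
    intro hdis
    show spec T \ specW T = lpoles T
    ext l
    constructor
    · rintro ⟨hspec, hW⟩
      have hWeyl : isWeyl (T - l • 1) := not_not.mp hW
      obtain ⟨hα, hβ, hcl, hαβ⟩ := hWeyl
      have hA : l ∈ specA T := by
        by_contra hA
        have hbb : boundedBelow (T - l • 1) := not_not.mp hA
        obtain ⟨c, hc, hcx⟩ := hbb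
        have hkerb : LinearMap.ker (T - l • 1).toLinearMap = ⊥ := by
          rw [LinearMap.ker_eq_bot']
          intro x hx
          have h1 := hcx x
          rw [show (T - l • 1) x = 0 from hx, norm_zero] at h1
          have h2 : ‖x‖ ≤ 0 := by nlinarith [norm_nonneg x]
          exact norm_eq_zero.mp (le_antisymm h2 (norm_nonneg x))
        have hα0 : Module.rank ℂ (LinearMap.ker (T - l • 1).toLinearMap) = 0 := by
          rw [hkerb, rank_bot]
        have hβ0 : Module.rank ℂ (X ⧸ LinearMap.range (T - l • 1).toLinearMap) = 0 := by
          have e1 : alpha (T - l • 1) = beta (T - l • 1) := hαβ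
          have e2 : alpha (T - l • 1) = 0 := hα0
          exact (e1.symm.trans e2 : beta (T - l • 1) = 0)
        have hsub : Subsingleton (X ⧸ LinearMap.range (T - l • 1).toLinearMap) :=
          rank_zero_iff.mp hβ0
        have hsurj : LinearMap.range (T - l • 1).toLinearMap = ⊤ :=
          Submodule.Quotient.subsingleton_iff.mp hsub
        exact (OpAux.not_mem_spec_of_bijective T l hkerb hsurj) hspec
      have hnuw : l ∉ specUW T := by
        intro hm
        exact hm ⟨hα, hcl, le_of_eq hαβ⟩
      have hpole : l ∈ poles T := by rw [← hUW]; exact ⟨hA, hnuw⟩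
      obtain ⟨-, ⟨na, hna⟩, ⟨nd, hnd⟩⟩ := hpole
      refine ⟨hA, ?_⟩
      have e1 := OpAux.ker_pow_stab (T - l • 1) hna nd
      have e2 := OpAux.ker_pow_stab (T - l • 1) hna (nd + 1)
      refine ⟨na + nd, e1.trans e2.symm, ?_⟩
      exact OpAux.closed_range_of_finite_codim ((T - l • 1) ^ (na + nd + 1))
        (OpAux.rank_quot_pow_lt (T - l • 1) hβ (na + nd + 1))
    · intro hl
      have hnuw : l ∉ specUW T := fun hm =>
        Set.eq_empty_iff_forall_notMem.mp hdis l ⟨hl, hm⟩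
      obtain ⟨hA, hLD⟩ := hl
      have hUSW : isUSW (T - l • 1) := not_not.mp hnuw
      obtain ⟨hα, hcl, hαβ⟩ := hUSW
      have hpole : l ∈ poles T := by rw [← hUW]; exact ⟨hA, hnuw⟩
      obtain ⟨hspec, ⟨na, hna⟩, ⟨nd, hnd⟩⟩ := hpole
      have hba := OpAux.beta_eq_alpha_of_pole (T - l • 1) hα hna hnd
      refine ⟨hspec, ?_⟩
      intro hmem
      refine hmem ⟨hα, ?_, hcl, ?_⟩
      · show Module.rank ℂ (X ⧸ LinearMap.range (T - l • 1).toLinearMap) < ℵ₀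
        rw [hba]; exact hα
      · show Module.rank ℂ (LinearMap.ker (T - l • 1).toLinearMap)
          = Module.rank ℂ (X ⧸ LinearMap.range (T - l • 1).toLinearMap)
        exact hba.symm
  refine ⟨key, ?_⟩
  intro heq
  apply key
  rw [Set.eq_empty_iff_forall_notMem]
  rintro l ⟨hl, hm⟩
  have husbw : isUSBW (T - l • 1) := OpAux.isLD_isUSBW _ hl.2
  rw [heq] at hm
  exact hm husbw

theorem stmt8 {X : Type*} [NormedAddCommGroup X] [NormedSpace ℂ X] [CompleteSpace X]
    (hX : ¬ FiniteDimensional ℂ X) (T : X →L[ℂ] X)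
    (h : propUWPi T) :
    (lpoles T ∩ specUW T = ∅ → propZPia T) ∧ (specUW T = specUBW T → propZPia T) := stmt8' hX T h
end

section
/- If T satisfies property (gb), then T satisfies property (UW_Π) if and only if T satisfies property (Z_{Π_a}). -/
namespace AuxOp

open LinearMap Set


variable {X : Type*} [NormedAddCommGroup X] [NormedSpace ℂ X]

lemma pow_succ_apply (S : X →L[ℂ] X) (n : ℕ) (x : X) :
    (S ^ (n + 1)) x = (S ^ n) (S x) := by
  rw [pow_succ]; rfl

lemma pow_succ_apply' (S : X →L[ℂ] X) (n : ℕ) (x : X) :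
    (S ^ (n + 1)) x = S ((S ^ n) x) := by
  rw [pow_succ']; rfl

lemma comm_pow (S : X →L[ℂ] X) (n : ℕ) (x : X) :
    S ((S ^ n) x) = (S ^ n) (S x) := by
  rw [← pow_succ_apply', pow_succ_apply]

lemma injective_pow {S : X →L[ℂ] X} (h : Function.Injective S) (n : ℕ) :
    Function.Injective ⇑(S ^ n) := by
  induction n with
  | zero => simpa [pow_zero] using Function.injective_id
  | succ n ih =>
      intro x y hxy
      rw [pow_succ_apply, pow_succ_apply] at hxy
      exact h (ih hxy)

lemma ker_pow_le (S : X →L[ℂ] X) (p k : ℕ) :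
    LinearMap.ker ((S ^ p : X →L[ℂ] X) : X →ₗ[ℂ] X) ≤ LinearMap.ker ((S ^ (p + k) : X →L[ℂ] X) : X →ₗ[ℂ] X) := by
  intro x hx
  rw [LinearMap.mem_ker, ContinuousLinearMap.coe_coe] at hx ⊢
  rw [add_comm, pow_add]
  show (S ^ k) ((S ^ p) x) = 0
  rw [hx, map_zero]

lemma range_pow_le (S : X →L[ℂ] X) (p k : ℕ) :
    LinearMap.range ((S ^ (p + k) : X →L[ℂ] X) : X →ₗ[ℂ] X) ≤ LinearMap.range ((S ^ p : X →L[ℂ] X) : X →ₗ[ℂ] X) := by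
  rintro x ⟨y, rfl⟩
  rw [pow_add]
  exact ⟨(S ^ k) y, rfl⟩

lemma ker_stab {S : X →L[ℂ] X} {p : ℕ}
    (hp : LinearMap.ker ((S ^ p : X →L[ℂ] X) : X →ₗ[ℂ] X) = LinearMap.ker ((S ^ (p + 1) : X →L[ℂ] X) : X →ₗ[ℂ] X)) (k : ℕ) :
    LinearMap.ker ((S ^ (p + k) : X →L[ℂ] X) : X →ₗ[ℂ] X) = LinearMap.ker ((S ^ p : X →L[ℂ] X) : X →ₗ[ℂ] X) := by
  induction k with
  | zero => rfl
  | succ k ih =>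
      refine le_antisymm ?_ (ker_pow_le S p (k+1))
      intro x hx
      rw [LinearMap.mem_ker] at hx
      have h1 : (S ^ (p + k)) (S x) = 0 := by
        rw [← pow_succ_apply]; exact hx
      have h2 : S x ∈ LinearMap.ker ((S ^ p : X →L[ℂ] X) : X →ₗ[ℂ] X) := ih ▸ LinearMap.mem_ker.mpr h1
      have h3 : x ∈ LinearMap.ker ((S ^ (p + 1) : X →L[ℂ] X) : X →ₗ[ℂ] X) := by
        rw [LinearMap.mem_ker, ContinuousLinearMap.coe_coe, pow_succ_apply]
        exact LinearMap.mem_ker.mp h2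
      exact hp ▸ h3

lemma range_pow_succ (S : X →L[ℂ] X) (m : ℕ) :
    LinearMap.range ((S ^ (m + 1) : X →L[ℂ] X) : X →ₗ[ℂ] X) = (LinearMap.range ((S ^ m : X →L[ℂ] X) : X →ₗ[ℂ] X)).map (S : X →ₗ[ℂ] X) := by
  ext x
  constructor
  · rintro ⟨y, rfl⟩
    exact ⟨(S ^ m) y, ⟨y, rfl⟩, (pow_succ_apply' S m y).symm⟩
  · rintro ⟨z, ⟨y, rfl⟩, rfl⟩
    exact ⟨y, pow_succ_apply' S m y⟩

lemma range_stab {S : X →L[ℂ] X} {q : ℕ}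
    (hq : LinearMap.range ((S ^ q : X →L[ℂ] X) : X →ₗ[ℂ] X) = LinearMap.range ((S ^ (q + 1) : X →L[ℂ] X) : X →ₗ[ℂ] X)) (k : ℕ) :
    LinearMap.range ((S ^ (q + k) : X →L[ℂ] X) : X →ₗ[ℂ] X) = LinearMap.range ((S ^ q : X →L[ℂ] X) : X →ₗ[ℂ] X) := by
  induction k with
  | zero => rfl
  | succ k ih =>
      have : LinearMap.range ((S ^ (q + k + 1) : X →L[ℂ] X) : X →ₗ[ℂ] X) = (LinearMap.range ((S ^ (q + k) : X →L[ℂ] X) : X →ₗ[ℂ] X)).map (S : X →ₗ[ℂ] X) :=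
        range_pow_succ S (q + k)
      rw [show q + (k+1) = q + k + 1 from rfl, this, ih, ← range_pow_succ, ← hq]

variable [CompleteSpace X]

/-- Key lemma: if the ascent stabilizes at `p` and `R(S^(p+1))` is closed, then `S` is
bounded below on `R(S^(p+1))`. -/
lemma key {S : X →L[ℂ] X} {p : ℕ}
    (hker : LinearMap.ker ((S ^ p : X →L[ℂ] X) : X →ₗ[ℂ] X) = LinearMap.ker ((S ^ (p + 1) : X →L[ℂ] X) : X →ₗ[ℂ] X))
    (hcl : IsClosed ((LinearMap.range ((S ^ (p + 1) : X →L[ℂ] X) : X →ₗ[ℂ] X) : Submodule ℂ X) : Set X)) :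
    ∃ c > 0, ∀ y ∈ LinearMap.range ((S ^ (p + 1) : X →L[ℂ] X) : X →ₗ[ℂ] X), ‖y‖ ≤ c * ‖S y‖ := by
  set M : Submodule ℂ X := LinearMap.range ((S ^ (p + 1) : X →L[ℂ] X) : X →ₗ[ℂ] X) with hM
  haveI : CompleteSpace M := hcl.completeSpace_coe
  set g : X →L[ℂ] M := (S ^ (p + 1)).codRestrict M (fun x => LinearMap.mem_range_self _ x)
  have hg : Function.Surjective g := by
    rintro ⟨y, ⟨x, rfl⟩⟩
    exact ⟨x, rfl⟩
  obtain ⟨C, hC0, hC⟩ := g.exists_preimage_norm_le hg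
  refine ⟨‖(S ^ p : X →L[ℂ] X)‖ * C + 1, by positivity, ?_⟩
  rintro y ⟨u, rfl⟩
  have hSy : S ((S ^ (p+1)) u) ∈ M := by
    rw [comm_pow]
    exact LinearMap.mem_range_self _ _
  obtain ⟨x, hx, hxn⟩ := hC ⟨S ((S ^ (p+1)) u), hSy⟩
  have hxg : (S ^ (p + 1)) x = S ((S ^ (p+1)) u) := congrArg Subtype.val hx
  have hker' : S u - x ∈ LinearMap.ker ((S ^ (p + 1) : X →L[ℂ] X) : X →ₗ[ℂ] X) := by
    rw [LinearMap.mem_ker, ContinuousLinearMap.coe_coe, map_sub, hxg, ← pow_succ_apply', ← pow_succ_apply, sub_self]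
  have hker'' : S u - x ∈ LinearMap.ker ((S ^ p : X →L[ℂ] X) : X →ₗ[ℂ] X) := hker ▸ hker'
  have heq : (S ^ (p + 1)) u = (S ^ p) x := by
    have h0 : (S ^ p) (S u - x) = 0 := LinearMap.mem_ker.mp hker''
    rw [map_sub, sub_eq_zero] at h0
    rw [pow_succ_apply, h0]
  have hnx : ‖x‖ ≤ C * ‖S ((S ^ (p+1)) u)‖ := by
    simpa using hxn
  calc ‖(S ^ (p+1)) u‖ = ‖(S ^ p) x‖ := by rw [heq]
    _ ≤ ‖(S ^ p : X →L[ℂ] X)‖ * ‖x‖ := (S ^ p).le_opNorm x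
    _ ≤ ‖(S ^ p : X →L[ℂ] X)‖ * (C * ‖S ((S ^ (p+1)) u)‖) := by
        exact mul_le_mul_of_nonneg_left hnx (norm_nonneg _)
    _ ≤ (‖(S ^ p : X →L[ℂ] X)‖ * C + 1) * ‖S ((S ^ (p+1)) u)‖ := by
        rw [← mul_assoc]
        exact mul_le_mul_of_nonneg_right (by linarith [norm_nonneg (S ((S ^ (p+1)) u))])
          (norm_nonneg _)



/-- image of a closed submodule under a bounded-below-on-it map is closed -/
lemma image_closed_of_bound {S : X →L[ℂ] X} {M : Submodule ℂ X} [CompleteSpace X]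
    (hMcl : IsClosed (M : Set X)) {c : ℝ} (hc : 0 < c)
    (hb : ∀ y ∈ M, ‖y‖ ≤ c * ‖S y‖) : IsClosed (⇑S '' (M : Set X)) := by
  haveI : CompleteSpace M := hMcl.completeSpace_coe
  set f : M →L[ℂ] X := S.comp M.subtypeL
  have hbf : ∀ z : M, ‖z‖ ≤ c.toNNReal * ‖f z‖ := by
    intro z
    have := hb z z.2
    simpa [f, Real.coe_toNNReal c hc.le] using this
  have ha : AntilipschitzWith c.toNNReal f := f.antilipschitz_of_bound hbf
  have : IsClosed (Set.range f) := ha.isClosed_range f.uniformContinuous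
  have heq : Set.range ⇑f = ⇑S '' (M : Set X) := by
    ext x
    constructor
    · rintro ⟨z, rfl⟩; exact ⟨z, z.2, rfl⟩
    · rintro ⟨y, hy, rfl⟩; exact ⟨⟨y, hy⟩, rfl⟩
  rwa [heq] at this

lemma range_pow_succ_set (S : X →L[ℂ] X) (m : ℕ) :
    ((LinearMap.range ((S ^ (m + 1) : X →L[ℂ] X) : X →ₗ[ℂ] X) : Submodule ℂ X) : Set X)
      = ⇑S '' ((LinearMap.range ((S ^ m : X →L[ℂ] X) : X →ₗ[ℂ] X) : Submodule ℂ X) : Set X) := by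
  ext x
  constructor
  · rintro ⟨y, rfl⟩
    refine ⟨(S ^ m) y, ⟨y, rfl⟩, ?_⟩
    show S ((S ^ m) y) = (S ^ (m+1)) y
    rw [pow_succ']; rfl
  · rintro ⟨z, ⟨y, rfl⟩, rfl⟩
    refine ⟨y, ?_⟩
    show (S ^ (m+1)) y = S ((S ^ m) y)
    rw [pow_succ']; rfl

/-- a surjective bounded map between Banach spaces sends closed "saturated" sets to closed sets -/
lemma image_closed_of_saturated {E F : Type*} [NormedAddCommGroup E] [NormedSpace ℂ E]
    [NormedAddCommGroup F] [NormedSpace ℂ F] [CompleteSpace E] [CompleteSpace F]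
    (g : E →L[ℂ] F) (hsurj : Function.Surjective g) {C : Set E} (hC : IsClosed C)
    (hsat : ∀ x ∈ C, ∀ z : E, g z = 0 → x + z ∈ C) : IsClosed (⇑g '' C) := by
  rw [← isOpen_compl_iff]
  have heq : (⇑g '' C)ᶜ = ⇑g '' Cᶜ := by
    ext y
    constructor
    · intro hy
      obtain ⟨w, rfl⟩ := hsurj y
      exact ⟨w, fun hw => hy ⟨w, hw, rfl⟩, rfl⟩
    · rintro ⟨w, hw, rfl⟩ ⟨x, hx, hxy⟩
      have : g (w - x) = 0 := by rw [map_sub, hxy, sub_self]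
      have := hsat x hx (w - x) this
      rw [add_sub_cancel] at this
      exact hw this
  rw [heq]
  exact g.isOpenMap hsurj _ hC.isOpen_compl

/-- closed submodule ⊔ finite-dimensional submodule is closed -/
lemma isClosed_sup_findim {E : Type*} [NormedAddCommGroup E] [NormedSpace ℂ E]
    (N F : Submodule ℂ E) (hN : IsClosed (N : Set E)) [FiniteDimensional ℂ F] :
    IsClosed ((N ⊔ F : Submodule ℂ E) : Set E) := by
  haveI : IsClosed (N : Set E) := hN
  have hker : LinearMap.ker N.mkQ = N := N.ker_mkQ
  have hsub : (N ⊔ F : Submodule ℂ E) = (F.map N.mkQ).comap N.mkQ := by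
    rw [Submodule.comap_map_eq, hker, sup_comm]
  have hcont : Continuous ⇑N.mkQ := N.isOpenQuotientMap_mkQ.continuous
  have hclosed : IsClosed ((F.map N.mkQ : Submodule ℂ (E ⧸ N)) : Set (E ⧸ N)) :=
    Submodule.closed_of_finiteDimensional _
  rw [hsub]
  exact hclosed.preimage hcont



section Part3

open OpSpec

set_option linter.unusedSectionVars false

lemma image_closed_of_semifredholm {g : X →L[ℂ] X} {M N : Submodule ℂ X}
    (hNM : N ≤ M) (hMcl : IsClosed (M : Set X)) (hNcl : IsClosed (N : Set X))
    (hgM : IsClosed (⇑g '' (M : Set X)))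
    (hfin : FiniteDimensional ℂ ↥(LinearMap.ker (g : X →ₗ[ℂ] X) ⊓ M : Submodule ℂ X)) :
    IsClosed (⇑g '' (N : Set X)) := by
  haveI : CompleteSpace M := hMcl.completeSpace_coe
  set R : Submodule ℂ X := M.map (g : X →ₗ[ℂ] X) with hRdef
  have hRset : (R : Set X) = ⇑g '' (M : Set X) := Submodule.map_coe _ _
  have hRcl : IsClosed (R : Set X) := by rw [hRset]; exact hgM
  haveI : CompleteSpace R := hRcl.completeSpace_coe
  set Φ : M →L[ℂ] R :=
    (g.comp M.subtypeL).codRestrict R (fun x => Submodule.mem_map_of_mem x.2) with hΦdef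
  have hΦval : ∀ x : M, ((Φ x : R) : X) = g (x : X) := fun x => rfl
  have hΦsurj : Function.Surjective Φ := by
    rintro ⟨y, x, hx, rfl⟩
    exact ⟨⟨x, hx⟩, rfl⟩
  set F : Submodule ℂ X := LinearMap.ker (g : X →ₗ[ℂ] X) ⊓ M with hFdef
  haveI : FiniteDimensional ℂ F := hfin
  set C : Set M := Subtype.val ⁻¹' ((N ⊔ F : Submodule ℂ X) : Set X) with hCdef
  have hCcl : IsClosed C :=
    (isClosed_sup_findim N F hNcl).preimage continuous_subtype_val
  have hsat : ∀ x ∈ C, ∀ z : M, Φ z = 0 → x + z ∈ C := by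
    intro x hx z hz
    have hz0 : g (z : X) = 0 := by
      have := congrArg (Subtype.val) hz
      simpa [hΦval] using this
    have hzF : (z : X) ∈ F := ⟨LinearMap.mem_ker.mpr hz0, z.2⟩
    show ((x + z : M) : X) ∈ (N ⊔ F : Submodule ℂ X)
    exact Submodule.add_mem _ hx (Submodule.mem_sup_right hzF)
  have himg : IsClosed (⇑Φ '' C) := image_closed_of_saturated Φ hΦsurj hCcl hsat
  have hfinal : ⇑g '' (N : Set X) = Subtype.val '' (⇑Φ '' C) := by
    ext y
    constructor
    · rintro ⟨x, hxN, rfl⟩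
      have hxM : x ∈ M := hNM hxN
      refine ⟨Φ ⟨x, hxM⟩, ⟨⟨x, hxM⟩, ?_, rfl⟩, hΦval _⟩
      show ((⟨x, hxM⟩ : M) : X) ∈ (N ⊔ F : Submodule ℂ X)
      exact Submodule.mem_sup_left hxN
    · rintro ⟨-, ⟨m, hmC, rfl⟩, rfl⟩
      have hm : (m : X) ∈ (N ⊔ F : Submodule ℂ X) := hmC
      obtain ⟨a, haN, b, hbF, hab⟩ := Submodule.mem_sup.mp hm
      refine ⟨a, haN, ?_⟩
      have hb0 : g b = 0 := LinearMap.mem_ker.mp hbF.1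
      rw [hΦval, ← hab, map_add, hb0, add_zero]
  rw [hfinal]
  exact hRcl.isClosedEmbedding_subtypeVal.isClosedMap _ himg

lemma closed_range_powers {S : X →L[ℂ] X} {n : ℕ}
    (hcl : IsClosed ((LinearMap.range ((S ^ n : X →L[ℂ] X) : X →ₗ[ℂ] X) : Submodule ℂ X) : Set X))
    (hgM : IsClosed (⇑S '' ((LinearMap.range ((S ^ n : X →L[ℂ] X) : X →ₗ[ℂ] X) : Submodule ℂ X) : Set X)))
    (hfin : FiniteDimensional ℂ
      ↥(LinearMap.ker (S : X →ₗ[ℂ] X) ⊓ LinearMap.range ((S ^ n : X →L[ℂ] X) : X →ₗ[ℂ] X) : Submodule ℂ X)) :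
    ∀ k : ℕ, IsClosed ((LinearMap.range ((S ^ (n + 1 + k) : X →L[ℂ] X) : X →ₗ[ℂ] X) : Submodule ℂ X) : Set X) := by
  intro k
  induction k with
  | zero => rw [show n + 1 + 0 = n + 1 from rfl, range_pow_succ_set]; exact hgM
  | succ k ih =>
      have hNM : LinearMap.range ((S ^ (n + 1 + k) : X →L[ℂ] X) : X →ₗ[ℂ] X) ≤ LinearMap.range ((S ^ n : X →L[ℂ] X) : X →ₗ[ℂ] X) := by
        have := range_pow_le S n (1 + k)
        rwa [← add_assoc] at this
      have := image_closed_of_semifredholm hNM hcl ih hgM hfin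
      rw [show n + 1 + (k + 1) = (n + 1 + k) + 1 from rfl, range_pow_succ_set]
      exact this

lemma isUSBW_facts {S : X →L[ℂ] X} (hB : isUSBW S) :
    ∃ n : ℕ, IsClosed ((LinearMap.range ((S ^ n : X →L[ℂ] X) : X →ₗ[ℂ] X) : Submodule ℂ X) : Set X) ∧
      IsClosed (⇑S '' ((LinearMap.range ((S ^ n : X →L[ℂ] X) : X →ₗ[ℂ] X) : Submodule ℂ X) : Set X)) ∧
      FiniteDimensional ℂ
        ↥(LinearMap.ker (S : X →ₗ[ℂ] X) ⊓ LinearMap.range ((S ^ n : X →L[ℂ] X) : X →ₗ[ℂ] X) : Submodule ℂ X) := by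
  obtain ⟨n, hcl, husw⟩ := hB
  set M : Submodule ℂ X := LinearMap.range ((S ^ n : X →L[ℂ] X) : X →ₗ[ℂ] X) with hMdef
  have hinv : ∀ x ∈ M, (S : X →ₗ[ℂ] X) x ∈ M := by
    rintro x ⟨y, rfl⟩
    show S ((S ^ n) y) ∈ M
    rw [comm_pow]
    exact LinearMap.mem_range_self _ _
  obtain ⟨hk, hclr, -⟩ := husw hinv
  set S₀ : M →ₗ[ℂ] M := (S : X →ₗ[ℂ] X).restrict hinv with hS₀def
  have hS₀val : ∀ x : M, ((S₀ x : M) : X) = S (x : X) := fun x => rfl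
  refine ⟨n, hcl, ?_, ?_⟩
  · -- S '' M = val '' (range S₀)
    have himg : ⇑S '' (M : Set X)
        = Subtype.val '' ((LinearMap.range S₀ : Submodule ℂ M) : Set M) := by
      ext y
      constructor
      · rintro ⟨x, hxM, rfl⟩
        exact ⟨S₀ ⟨x, hxM⟩, LinearMap.mem_range_self _ _, hS₀val _⟩
      · rintro ⟨-, ⟨m, rfl⟩, rfl⟩
        exact ⟨(m : X), m.2, (hS₀val m).symm⟩
    rw [himg]
    exact hcl.isClosedEmbedding_subtypeVal.isClosedMap _ hclr
  · -- finite dimensionality of ker (S : X →ₗ[ℂ] X) ⊓ M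
    set ψ : ↥(LinearMap.ker (S : X →ₗ[ℂ] X) ⊓ M : Submodule ℂ X) →ₗ[ℂ] ↥(LinearMap.ker S₀) :=
      { toFun := fun x => ⟨⟨(x : X), x.2.2⟩, by
          apply Subtype.ext
          show S ((x : X)) = (0 : X)
          exact LinearMap.mem_ker.mp x.2.1⟩
        map_add' := fun x y => by apply Subtype.ext; apply Subtype.ext; rfl
        map_smul' := fun c x => by apply Subtype.ext; apply Subtype.ext; rfl }
    have hψinj : Function.Injective ψ := by
      intro a b hab
      apply Subtype.ext
      have := congrArg (fun z : ↥(LinearMap.ker S₀) => ((z : M) : X)) hab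
      exact this
    have hrank : Module.rank ℂ ↥(LinearMap.ker (S : X →ₗ[ℂ] X) ⊓ M : Submodule ℂ X) < Cardinal.aleph0 :=
      lt_of_le_of_lt (LinearMap.rank_le_of_injective ψ hψinj) hk
    haveI : Module.Free ℂ ↥(LinearMap.ker (S : X →ₗ[ℂ] X) ⊓ M : Submodule ℂ X) :=
      Module.Free.of_divisionRing _ _
    exact Module.rank_lt_aleph0_iff.mp hrank

lemma isLD_of_finAsc_isUSBW {S : X →L[ℂ] X} (hasc : finAsc S) (hB : isUSBW S) : isLD S := by
  obtain ⟨p, hp⟩ := hasc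
  obtain ⟨n, hcl, hgM, hfin⟩ := isUSBW_facts hB
  refine ⟨max p n, ?_, ?_⟩
  · have h1 : LinearMap.ker ((S ^ (p + (max p n - p)) : X →L[ℂ] X) : X →ₗ[ℂ] X) = LinearMap.ker ((S ^ p : X →L[ℂ] X) : X →ₗ[ℂ] X) := ker_stab hp _
    have h2 : LinearMap.ker ((S ^ (p + (max p n + 1 - p)) : X →L[ℂ] X) : X →ₗ[ℂ] X) = LinearMap.ker ((S ^ p : X →L[ℂ] X) : X →ₗ[ℂ] X) :=
      ker_stab hp _
    rw [show p + (max p n - p) = max p n by omega] at h1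
    rw [show p + (max p n + 1 - p) = max p n + 1 by omega] at h2
    rw [h1, h2]
  · have := closed_range_powers hcl hgM hfin (max p n - n)
    rwa [show n + 1 + (max p n - n) = max p n + 1 by omega] at this

end Part3

section Part4

open OpSpec

set_option linter.unusedSectionVars false

lemma isUSW_of_isWeyl {S : X →L[ℂ] X} (h : isWeyl S) : isUSW S :=
  ⟨h.1, h.2.2.1, le_of_eq h.2.2.2⟩

lemma isUSBW_of_isLD {S : X →L[ℂ] X} (h : isLD S) : isUSBW S := by
  obtain ⟨p, hker, hcl⟩ := h
  obtain ⟨c, hc0, hc⟩ := key hker hcl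
  refine ⟨p + 1, hcl, ?_⟩
  intro hinv
  set M : Submodule ℂ X := LinearMap.range ((S ^ (p + 1) : X →L[ℂ] X) : X →ₗ[ℂ] X) with hMdef
  set S₀ : M →ₗ[ℂ] M := (S : X →ₗ[ℂ] X).restrict hinv with hS₀def
  have hS₀val : ∀ x : M, ((S₀ x : M) : X) = S (x : X) := fun _ => rfl
  have hkerbot : LinearMap.ker S₀ = ⊥ := by
    rw [LinearMap.ker_eq_bot']
    intro m hm
    have h0 : S (m : X) = 0 := by
      have := congrArg (fun z : M => (z : X)) hm
      simpa [hS₀val] using this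
    have hb := hc (m : X) m.2
    rw [h0, norm_zero, mul_zero] at hb
    exact Subtype.ext (norm_le_zero_iff.mp hb)
  have hrank0 : Module.rank ℂ ↥(LinearMap.ker S₀) = 0 := by
    rw [hkerbot]; exact rank_bot ℂ M
  refine ⟨?_, ?_, ?_⟩
  · rw [hrank0]; exact Cardinal.aleph0_pos
  · have h2 : IsClosed (⇑S '' (M : Set X)) := image_closed_of_bound hcl hc0 hc
    have heq : ((LinearMap.range S₀ : Submodule ℂ M) : Set M)
        = Subtype.val ⁻¹' (⇑S '' (M : Set X)) := by
      ext m
      constructor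
      · rintro ⟨z, rfl⟩
        exact ⟨(z : X), z.2, (hS₀val z).symm⟩
      · rintro ⟨x, hxM, hx⟩
        exact ⟨⟨x, hxM⟩, Subtype.ext hx⟩
    rw [heq]
    exact h2.preimage continuous_subtype_val
  · rw [hrank0]; exact zero_le

lemma isUSBW_of_isUSW {S : X →L[ℂ] X} (h : isUSW S) : isUSBW S := by
  obtain ⟨ha, hclo, hab⟩ := h
  have h0 : (LinearMap.range ((S ^ 0 : X →L[ℂ] X) : X →ₗ[ℂ] X) : Submodule ℂ X) = ⊤ := by
    rw [pow_zero]
    exact LinearMap.range_eq_top.mpr (fun x => ⟨x, rfl⟩)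
  refine ⟨0, ?_, ?_⟩
  · rw [h0]; exact isClosed_univ
  intro hinv
  set M : Submodule ℂ X := LinearMap.range ((S ^ 0 : X →L[ℂ] X) : X →ₗ[ℂ] X) with hMdef
  have hM : ∀ x : X, x ∈ M := fun x => h0 ▸ Submodule.mem_top
  set S₀ : M →ₗ[ℂ] M := (S : X →ₗ[ℂ] X).restrict hinv with hS₀def
  have hS₀val : ∀ x : M, ((S₀ x : M) : X) = S (x : X) := fun _ => rfl
  have hkle : Module.rank ℂ ↥(LinearMap.ker S₀) ≤ alpha S := by
    set ψ : ↥(LinearMap.ker S₀) →ₗ[ℂ] ↥(LinearMap.ker (S : X →ₗ[ℂ] X)) :=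
      { toFun := fun z => ⟨((z : M) : X), by
          have hz : S₀ (z : M) = 0 := LinearMap.mem_ker.mp z.2
          have h1 : S (((z : M) : X)) = 0 := by
            calc S (((z : M) : X)) = ((S₀ (z : M) : M) : X) := (hS₀val _).symm
              _ = ((0 : M) : X) := by rw [hz]
              _ = 0 := rfl
          exact LinearMap.mem_ker.mpr h1⟩
        map_add' := fun x y => by apply Subtype.ext; rfl
        map_smul' := fun c x => by apply Subtype.ext; rfl }
    have hψinj : Function.Injective ψ := by
      intro a b hab'
      apply Subtype.ext; apply Subtype.ext
      exact congrArg (fun z : ↥(LinearMap.ker (S : X →ₗ[ℂ] X)) => (z : X)) hab'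
    exact LinearMap.rank_le_of_injective ψ hψinj
  refine ⟨lt_of_le_of_lt hkle ha, ?_, ?_⟩
  · have heq : ((LinearMap.range S₀ : Submodule ℂ M) : Set M)
        = Subtype.val ⁻¹' ((LinearMap.range (S : X →ₗ[ℂ] X) : Submodule ℂ X) : Set X) := by
      ext m
      constructor
      · rintro ⟨z, rfl⟩
        exact ⟨(z : X), (hS₀val z).symm⟩
      · rintro ⟨x, hx⟩
        exact ⟨⟨x, hM x⟩, Subtype.ext hx⟩
    rw [heq]
    exact hclo.preimage continuous_subtype_val
  · refine le_trans (le_trans hkle hab) ?_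
    set φ : M →ₗ[ℂ] (X ⧸ LinearMap.range (S : X →ₗ[ℂ] X)) :=
      (LinearMap.range (S : X →ₗ[ℂ] X)).mkQ.comp M.subtype with hφdef
    have hle : LinearMap.range S₀ ≤ LinearMap.ker φ := by
      rintro z ⟨m, rfl⟩
      show (LinearMap.range (S : X →ₗ[ℂ] X)).mkQ ((S₀ m : M) : X) = 0
      rw [hS₀val]
      exact (Submodule.Quotient.mk_eq_zero _).mpr (LinearMap.mem_range_self _ _)
    set lm := Submodule.liftQ (LinearMap.range S₀) φ hle with hlmdef
    have hsurj : Function.Surjective lm := by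
      intro q
      obtain ⟨x, rfl⟩ := Submodule.mkQ_surjective _ q
      exact ⟨Submodule.Quotient.mk ⟨x, hM x⟩, rfl⟩
    exact rank_le_of_surjective lm hsurj

lemma injective_of_boundedBelow {S : X →L[ℂ] X} (h : boundedBelow S) :
    Function.Injective ⇑S := by
  obtain ⟨c, hc0, hc⟩ := h
  intro x y hxy
  have h0 : S (x - y) = 0 := by rw [map_sub, hxy, sub_self]
  have hle : c * ‖x - y‖ ≤ 0 := by
    have := hc (x - y)
    rwa [h0, norm_zero] at this
  have hn : ‖x - y‖ ≤ 0 := by nlinarith [norm_nonneg (x - y)]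
  have : x - y = 0 := norm_le_zero_iff.mp hn
  exact sub_eq_zero.mp this

lemma surjective_of_injective_finDesc {S : X →L[ℂ] X}
    (hi : Function.Injective ⇑S) (hd : finDesc S) : Function.Surjective ⇑S := by
  obtain ⟨q, hq⟩ := hd
  intro x
  have : (S ^ q) x ∈ LinearMap.range ((S ^ (q + 1) : X →L[ℂ] X) : X →ₗ[ℂ] X) := hq ▸ LinearMap.mem_range_self _ x
  obtain ⟨y, hy⟩ := this
  rw [ContinuousLinearMap.coe_coe, pow_succ_apply] at hy
  exact ⟨y, injective_pow hi q hy⟩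

lemma not_mem_spec_of_bijective {T : X →L[ℂ] X} {l : ℂ}
    (hbij : Function.Bijective ⇑(T - l • (1 : X →L[ℂ] X))) : l ∉ spec T := by
  set S : X →L[ℂ] X := T - l • 1 with hSdef
  have hker : LinearMap.ker (S : X →ₗ[ℂ] X) = ⊥ := LinearMap.ker_eq_bot.mpr hbij.1
  have hrange : LinearMap.range (S : X →ₗ[ℂ] X) = ⊤ := LinearMap.range_eq_top.mpr hbij.2
  set e := ContinuousLinearEquiv.ofBijective S hker hrange with hedef
  have hecoe : ∀ x, e x = S x := fun x => by
    rw [hedef]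
    rw [ContinuousLinearEquiv.coeFn_ofBijective]
  have hunit : IsUnit S := by
    refine ⟨⟨S, (e.symm : X →L[ℂ] X), ?_, ?_⟩, rfl⟩
    · ext x
      show S (e.symm x) = x
      rw [← hecoe (e.symm x)]
      exact e.apply_symm_apply x
    · ext x
      show e.symm (S x) = x
      rw [← hecoe x]
      exact e.symm_apply_apply x
  show l ∉ spectrum ℂ T
  apply spectrum.notMem_iff.mpr
  have halg : algebraMap ℂ (X →L[ℂ] X) l - T = -S := by
    rw [Algebra.algebraMap_eq_smul_one, hSdef, neg_sub]
  rw [halg]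
  exact hunit.neg

end Part4

section Part5

open OpSpec

set_option linter.unusedSectionVars false

lemma rank_ker_pow_lt {S : X →L[ℂ] X}
    (ha : Module.rank ℂ ↥(LinearMap.ker (S : X →ₗ[ℂ] X)) < Cardinal.aleph0) (k : ℕ) :
    Module.rank ℂ ↥(LinearMap.ker ((S ^ k : X →L[ℂ] X) : X →ₗ[ℂ] X)) < Cardinal.aleph0 := by
  induction k with
  | zero =>
      have h1 : LinearMap.ker ((S ^ 0 : X →L[ℂ] X) : X →ₗ[ℂ] X) = ⊥ := by
        rw [pow_zero]
        exact LinearMap.ker_eq_bot.mpr (fun x y hxy => hxy)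
      rw [h1, rank_bot]
      exact Cardinal.aleph0_pos
  | succ k ih =>
      set f : ↥(LinearMap.ker ((S ^ (k+1) : X →L[ℂ] X) : X →ₗ[ℂ] X)) →ₗ[ℂ] X :=
        (S : X →ₗ[ℂ] X).comp (LinearMap.ker ((S ^ (k+1) : X →L[ℂ] X) : X →ₗ[ℂ] X)).subtype with hfdef
      have hfval : ∀ x : ↥(LinearMap.ker ((S ^ (k+1) : X →L[ℂ] X) : X →ₗ[ℂ] X)), f x = S (x : X) := fun _ => rfl
      have hrn := LinearMap.rank_range_add_rank_ker f
      have h1 : LinearMap.range f ≤ LinearMap.ker ((S ^ k : X →L[ℂ] X) : X →ₗ[ℂ] X) := by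
        rintro x ⟨y, rfl⟩
        rw [LinearMap.mem_ker, ContinuousLinearMap.coe_coe, hfval, ← pow_succ_apply]
        exact LinearMap.mem_ker.mp y.2
      have h2 : Module.rank ℂ ↥(LinearMap.ker f) ≤ Module.rank ℂ ↥(LinearMap.ker (S : X →ₗ[ℂ] X)) := by
        set ψ : ↥(LinearMap.ker f) →ₗ[ℂ] ↥(LinearMap.ker (S : X →ₗ[ℂ] X)) :=
          { toFun := fun z => ⟨((z : ↥(LinearMap.ker ((S ^ (k+1) : X →L[ℂ] X) : X →ₗ[ℂ] X))) : X), by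
              have hz : f (z : ↥(LinearMap.ker ((S ^ (k+1) : X →L[ℂ] X) : X →ₗ[ℂ] X))) = 0 := LinearMap.mem_ker.mp z.2
              rw [hfval] at hz
              exact LinearMap.mem_ker.mpr hz⟩
            map_add' := fun x y => by apply Subtype.ext; rfl
            map_smul' := fun c x => by apply Subtype.ext; rfl }
        have hψinj : Function.Injective ψ := by
          intro a b hab
          apply Subtype.ext; apply Subtype.ext
          exact congrArg (fun z : ↥(LinearMap.ker (S : X →ₗ[ℂ] X)) => (z : X)) hab
        exact LinearMap.rank_le_of_injective ψ hψinj
      calc Module.rank ℂ ↥(LinearMap.ker ((S ^ (k+1) : X →L[ℂ] X) : X →ₗ[ℂ] X))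
          = Module.rank ℂ ↥(LinearMap.range f) + Module.rank ℂ ↥(LinearMap.ker f) := hrn.symm
        _ ≤ Module.rank ℂ ↥(LinearMap.ker ((S ^ k : X →L[ℂ] X) : X →ₗ[ℂ] X)) + Module.rank ℂ ↥(LinearMap.ker (S : X →ₗ[ℂ] X)) :=
            add_le_add (Submodule.rank_mono h1) h2
        _ < Cardinal.aleph0 := Cardinal.add_lt_aleph0 ih ha

lemma alpha_eq_beta {S : X →L[ℂ] X} (hp' : finAsc S) (hq' : finDesc S)
    (ha : alpha S < Cardinal.aleph0) : alpha S = beta S ∧ beta S < Cardinal.aleph0 := by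
  obtain ⟨p, hp⟩ := hp'
  obtain ⟨q, hq⟩ := hq'
  set d := max p q + 1 with hd
  have hker_d : ∀ m : ℕ, d ≤ m → LinearMap.ker ((S ^ m : X →L[ℂ] X) : X →ₗ[ℂ] X) = LinearMap.ker ((S ^ d : X →L[ℂ] X) : X →ₗ[ℂ] X) := by
    intro m hm
    have h1 := ker_stab hp (m - p)
    have h2 := ker_stab hp (d - p)
    rw [show p + (m - p) = m by omega] at h1
    rw [show p + (d - p) = d by omega] at h2
    rw [h1, h2]
  have hrange_d : ∀ m : ℕ, d ≤ m → LinearMap.range ((S ^ m : X →L[ℂ] X) : X →ₗ[ℂ] X) = LinearMap.range ((S ^ d : X →L[ℂ] X) : X →ₗ[ℂ] X) := by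
    intro m hm
    have h1 := range_stab hq (m - q)
    have h2 := range_stab hq (d - q)
    rw [show q + (m - q) = m by omega] at h1
    rw [show q + (d - q) = d by omega] at h2
    rw [h1, h2]
  set K := LinearMap.ker ((S ^ d : X →L[ℂ] X) : X →ₗ[ℂ] X) with hK
  set R := LinearMap.range ((S ^ d : X →L[ℂ] X) : X →ₗ[ℂ] X) with hR
  have hKfin : Module.rank ℂ ↥K < Cardinal.aleph0 := rank_ker_pow_lt ha d
  have hpowadd : ∀ y : X, (S ^ (d + d)) y = (S ^ d) ((S ^ d) y) := by
    intro y
    rw [pow_add]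
    rfl
  have hsum : K ⊔ R = ⊤ := by
    rw [eq_top_iff]
    rintro x -
    have hx : (S ^ d) x ∈ LinearMap.range ((S ^ (d + d) : X →L[ℂ] X) : X →ₗ[ℂ] X) := by
      rw [hrange_d (d + d) (by omega)]
      exact LinearMap.mem_range_self _ _
    obtain ⟨y, hy⟩ := hx
    have hxy : x - (S ^ d) y ∈ K := by
      rw [hK, LinearMap.mem_ker, ContinuousLinearMap.coe_coe, map_sub, ← hpowadd, show (S ^ (d + d)) y = (S ^ d) x from hy, sub_self]
    refine Submodule.mem_sup.mpr ⟨x - (S ^ d) y, hxy, (S ^ d) y, ⟨y, rfl⟩, by abel⟩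
  have hdisj : K ⊓ R = ⊥ := by
    rw [eq_bot_iff]
    rintro x ⟨hxK, hxR⟩
    obtain ⟨y, rfl⟩ := hxR
    have hy : y ∈ LinearMap.ker ((S ^ (d + d) : X →L[ℂ] X) : X →ₗ[ℂ] X) := by
      rw [LinearMap.mem_ker, ContinuousLinearMap.coe_coe, hpowadd]
      exact LinearMap.mem_ker.mp hxK
    rw [hker_d (d + d) (by omega)] at hy
    have : (S ^ d) y = 0 := LinearMap.mem_ker.mp hy
    rw [ContinuousLinearMap.coe_coe, this]
    exact Submodule.zero_mem ⊥
  have hSK : Submodule.map (S : X →ₗ[ℂ] X) K ≤ K := by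
    rintro x ⟨y, hyK, rfl⟩
    rw [hK, LinearMap.mem_ker, ContinuousLinearMap.coe_coe, ContinuousLinearMap.coe_coe, ← comm_pow]
    have hy0 : (S ^ d) y = 0 := LinearMap.mem_ker.mp hyK
    rw [hy0, map_zero]
  have hmapR : Submodule.map (S : X →ₗ[ℂ] X) R = R := by
    rw [hR, ← range_pow_succ]
    exact hrange_d (d + 1) (by omega)
  have hrangeS : LinearMap.range (S : X →ₗ[ℂ] X) = Submodule.map (S : X →ₗ[ℂ] X) K ⊔ R := by
    rw [← Submodule.map_top (S : X →ₗ[ℂ] X), ← hsum, Submodule.map_sup, hmapR]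
  set f : ↥K →ₗ[ℂ] (X ⧸ LinearMap.range (S : X →ₗ[ℂ] X)) :=
    (LinearMap.range (S : X →ₗ[ℂ] X)).mkQ.comp K.subtype with hfdef
  have hfval : ∀ x : ↥K, f x = (LinearMap.range (S : X →ₗ[ℂ] X)).mkQ (x : X) := fun _ => rfl
  have hfsurj : Function.Surjective f := by
    intro z
    obtain ⟨x, rfl⟩ := Submodule.mkQ_surjective _ z
    have hx : x ∈ K ⊔ R := hsum ▸ Submodule.mem_top
    obtain ⟨k, hk, r, hrR, hkr⟩ := Submodule.mem_sup.mp hx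
    refine ⟨⟨k, hk⟩, ?_⟩
    rw [hfval]
    have hrs : r ∈ LinearMap.range (S : X →ₗ[ℂ] X) := by
      rw [hrangeS]
      exact Submodule.mem_sup_right hrR
    have hsub : k - x ∈ LinearMap.range (S : X →ₗ[ℂ] X) := by
      have : k - x = -r := by rw [← hkr]; abel
      rw [this]
      exact neg_mem hrs
    rw [Submodule.mkQ_apply, Submodule.mkQ_apply]
    exact (Submodule.Quotient.eq _).mpr hsub
  have hmain1 : beta S + Module.rank ℂ ↥(LinearMap.ker f) = Module.rank ℂ ↥K := by
    have hrn := LinearMap.rank_range_add_rank_ker f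
    have hrtop : LinearMap.range f = ⊤ := LinearMap.range_eq_top.mpr hfsurj
    rw [hrtop] at hrn
    have htop : Module.rank ℂ ↥(⊤ : Submodule ℂ (X ⧸ LinearMap.range (S : X →ₗ[ℂ] X)))
        = Module.rank ℂ (X ⧸ LinearMap.range (S : X →ₗ[ℂ] X)) := rank_top ℂ _
    rw [htop] at hrn
    exact hrn
  have hRK : R ⊓ K = ⊥ := by rw [inf_comm]; exact hdisj
  have hkerf : LinearMap.ker f = Submodule.comap K.subtype (Submodule.map (S : X →ₗ[ℂ] X) K) := by
    ext x
    rw [LinearMap.mem_ker, Submodule.mem_comap, hfval, Submodule.mkQ_apply,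
      Submodule.Quotient.mk_eq_zero]
    constructor
    · intro hx
      have hx2 : (x : X) ∈ (Submodule.map (S : X →ₗ[ℂ] X) K ⊔ R) ⊓ K := by
        constructor
        · rw [← hrangeS]; exact hx
        · exact x.2
      rw [sup_inf_assoc_of_le _ hSK, hRK, sup_bot_eq] at hx2
      exact hx2
    · intro hx
      have hle : Submodule.map (S : X →ₗ[ℂ] X) K ≤ LinearMap.range (S : X →ₗ[ℂ] X) := by
        rw [hrangeS]; exact le_sup_left
      exact hle hx
  have hrkf : Module.rank ℂ ↥(LinearMap.ker f) = Module.rank ℂ ↥(Submodule.map (S : X →ₗ[ℂ] X) K) := by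
    rw [hkerf]
    exact LinearEquiv.rank_eq (Submodule.comapSubtypeEquivOfLe hSK)
  set g : ↥K →ₗ[ℂ] X := (S : X →ₗ[ℂ] X).comp K.subtype with hgdef
  have hgval : ∀ x : ↥K, g x = S (x : X) := fun _ => rfl
  have hrg : LinearMap.range g = Submodule.map (S : X →ₗ[ℂ] X) K := by
    ext x
    constructor
    · rintro ⟨y, rfl⟩
      exact ⟨(y : X), y.2, (hgval y).symm⟩
    · rintro ⟨y, hyK, rfl⟩
      exact ⟨⟨y, hyK⟩, rfl⟩
  have hkerS_le : LinearMap.ker (S : X →ₗ[ℂ] X) ≤ K := by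
    intro x hx
    rw [hK, LinearMap.mem_ker, ContinuousLinearMap.coe_coe]
    have h1 : (S ^ d) x = (S ^ (d - 1 + 1)) x := by rw [show d - 1 + 1 = d by omega]
    rw [h1, pow_succ_apply, show S x = 0 from LinearMap.mem_ker.mp hx, map_zero]
  have hkg : LinearMap.ker g = Submodule.comap K.subtype (LinearMap.ker (S : X →ₗ[ℂ] X)) := by
    ext x
    rw [LinearMap.mem_ker, Submodule.mem_comap, LinearMap.mem_ker]
    exact Iff.rfl
  have hrkg : Module.rank ℂ ↥(LinearMap.ker g) = alpha S := by
    rw [hkg]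
    exact LinearEquiv.rank_eq (Submodule.comapSubtypeEquivOfLe hkerS_le)
  have hmain2 : Module.rank ℂ ↥(Submodule.map (S : X →ₗ[ℂ] X) K) + alpha S = Module.rank ℂ ↥K := by
    have hrn := LinearMap.rank_range_add_rank_ker g
    rw [hrg, hrkg] at hrn
    exact hrn
  have hmlt : Module.rank ℂ ↥(Submodule.map (S : X →ₗ[ℂ] X) K) < Cardinal.aleph0 :=
    lt_of_le_of_lt (Submodule.rank_mono hSK) hKfin
  constructor
  · refine Cardinal.eq_of_add_eq_add_right ?_ hmlt
    have e1 : alpha S + Module.rank ℂ ↥(Submodule.map (S : X →ₗ[ℂ] X) K) = Module.rank ℂ ↥K := by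
      rw [add_comm]; exact hmain2
    have e2 : beta S + Module.rank ℂ ↥(Submodule.map (S : X →ₗ[ℂ] X) K) = Module.rank ℂ ↥K := by
      rw [← hrkf]; exact hmain1
    exact e1.trans e2.symm
  · have hble : beta S ≤ Module.rank ℂ ↥K := by
      rw [← hmain1]
      exact self_le_add_right _ _
    exact lt_of_le_of_lt hble hKfin

end Part5

section SpecLemmas

open OpSpec

set_option linter.unusedSectionVars false

lemma mem_specA_of_finDesc {T : X →L[ℂ] X} {l : ℂ} (hs : l ∈ spec T)
    (hd : finDesc (T - l • 1)) : l ∈ specA T := by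
  show ¬ boundedBelow (T - l • 1)
  intro hbb
  have hinj := injective_of_boundedBelow hbb
  exact not_mem_spec_of_bijective ⟨hinj, surjective_of_injective_finDesc hinj hd⟩ hs

lemma mem_specA_of_isWeyl {T : X →L[ℂ] X} {l : ℂ} (hs : l ∈ spec T)
    (hW : isWeyl (T - l • 1)) : l ∈ specA T := by
  show ¬ boundedBelow (T - l • 1)
  intro hbb
  have hinj := injective_of_boundedBelow hbb
  have hker : LinearMap.ker ((T - l • 1 : X →L[ℂ] X) : X →ₗ[ℂ] X) = ⊥ := LinearMap.ker_eq_bot.mpr hinj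
  have ha0 : alpha (T - l • 1) = 0 := by
    show Module.rank ℂ ↥(LinearMap.ker ((T - l • 1 : X →L[ℂ] X) : X →ₗ[ℂ] X)) = 0
    rw [hker]
    exact rank_bot ℂ X
  have hb0 : beta (T - l • 1) = 0 := by rw [← hW.2.2.2]; exact ha0
  have hsub : Subsingleton (X ⧸ LinearMap.range ((T - l • 1 : X →L[ℂ] X) : X →ₗ[ℂ] X)) := rank_zero_iff.mp hb0
  have hr : LinearMap.range ((T - l • 1 : X →L[ℂ] X) : X →ₗ[ℂ] X) = ⊤ :=
    Submodule.Quotient.subsingleton_iff.mp hsub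
  exact not_mem_spec_of_bijective ⟨hinj, LinearMap.range_eq_top.mp hr⟩ hs

end SpecLemmas

end AuxOp

open OpSpec Cardinal

theorem stmt10 {X : Type*} [NormedAddCommGroup X] [NormedSpace ℂ X] [CompleteSpace X]
    (hX : ¬ FiniteDimensional ℂ X) (T : X →L[ℂ] X)
    (h : propGb T) : propUWPi T ↔ propZPia T := by
  have hgb : specA T \ specUBW T = poles T := h
  constructor
  · intro h1
    have h1' : specA T \ specUW T = poles T := h1
    show spec T \ specW T = lpoles T
    apply Set.eq_of_subset_of_subset
    · rintro l ⟨hls, hlw⟩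
      have hW : isWeyl (T - l • 1) := not_not.mp hlw
      have hA : l ∈ specA T := AuxOp.mem_specA_of_isWeyl hls hW
      have hAU : l ∈ specA T \ specUW T := ⟨hA, not_not_intro (AuxOp.isUSW_of_isWeyl hW)⟩
      have hpole : l ∈ poles T := h1' ▸ hAU
      obtain ⟨hspec, hasc, hdesc⟩ := hpole
      have hAB : l ∈ specA T \ specUBW T := by
        rw [hgb]; exact ⟨hspec, hasc, hdesc⟩
      have hB : isUSBW (T - l • 1) := not_not.mp hAB.2
      exact ⟨hA, AuxOp.isLD_of_finAsc_isUSBW hasc hB⟩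
    · rintro l ⟨hA, hLD⟩
      have hB : isUSBW (T - l • 1) := AuxOp.isUSBW_of_isLD hLD
      have hAB : l ∈ specA T \ specUBW T := ⟨hA, not_not_intro hB⟩
      have hpole : l ∈ poles T := hgb ▸ hAB
      obtain ⟨hspec, hasc, hdesc⟩ := hpole
      have hAU : l ∈ specA T \ specUW T := by
        rw [h1']; exact ⟨hspec, hasc, hdesc⟩
      have hU : isUSW (T - l • 1) := not_not.mp hAU.2
      obtain ⟨heq, hblt⟩ := AuxOp.alpha_eq_beta hasc hdesc hU.1
      exact ⟨hspec, not_not_intro ⟨hU.1, hblt, hU.2.1, heq⟩⟩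
  · intro h2
    have h2' : spec T \ specW T = lpoles T := h2
    show specA T \ specUW T = poles T
    apply Set.eq_of_subset_of_subset
    · rintro l ⟨hA, hUn⟩
      have hU : isUSW (T - l • 1) := not_not.mp hUn
      have hAB : l ∈ specA T \ specUBW T := ⟨hA, not_not_intro (AuxOp.isUSBW_of_isUSW hU)⟩
      exact hgb ▸ hAB
    · intro l hpole
      obtain ⟨hspec, hasc, hdesc⟩ := hpole
      have hAB : l ∈ specA T \ specUBW T := by
        rw [hgb]; exact ⟨hspec, hasc, hdesc⟩
      have hA : l ∈ specA T := hAB.1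
      have hB : isUSBW (T - l • 1) := not_not.mp hAB.2
      have hLD : isLD (T - l • 1) := AuxOp.isLD_of_finAsc_isUSBW hasc hB
      have hlp : l ∈ lpoles T := ⟨hA, hLD⟩
      have hSW : l ∈ spec T \ specW T := by rw [h2']; exact hlp
      have hW : isWeyl (T - l • 1) := not_not.mp hSW.2
      exact ⟨hA, not_not_intro (AuxOp.isUSW_of_isWeyl hW)⟩
end

section
/- For T ∈ L(X) the following are equivalent: (i) T satisfies property (UW_Π) and Π_a(T) ∩ σ_uw(T) = ∅; (ii) T satisfies property (Z_{Π_a}) and σ_w(T)\σ_uw(T) = σ(T)\σ_a(T); (iii) T satisfies property (Z_{Π_a}) and (σ_a(T)\σ_uw(T)) ∩ σ_w(T) = ∅. -/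
namespace Stmt15Aux
open Submodule Cardinal OpSpec

variable {X : Type*} [NormedAddCommGroup X] [NormedSpace ℂ X]

set_option linter.unusedSectionVars false

section Alg
variable (f : X →ₗ[ℂ] X)

lemma ker_pow_mono : Monotone (fun n => LinearMap.ker (f ^ n)) := by
  apply monotone_nat_of_le_succ
  intro n x hx
  rw [LinearMap.mem_ker] at *
  rw [pow_succ', Module.End.mul_apply, hx, map_zero]

lemma range_pow_anti : Antitone (fun n => LinearMap.range (f ^ n)) := by
  apply antitone_nat_of_succ_le
  intro n y hy
  rw [LinearMap.mem_range] at *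
  obtain ⟨x, rfl⟩ := hy
  exact ⟨f x, by rw [pow_succ, Module.End.mul_apply]⟩

lemma ker_stab {p : ℕ} (h : LinearMap.ker (f ^ p) = LinearMap.ker (f ^ (p+1))) :
    ∀ k, LinearMap.ker (f ^ (p + k)) = LinearMap.ker (f ^ p) := by
  intro k
  induction k with
  | zero => rfl
  | succ k ih =>
    refine le_antisymm ?_ ?_
    · intro x hx
      rw [LinearMap.mem_ker] at hx
      rw [← ih, LinearMap.mem_ker]
      have hx' : (f ^ (p+1)) ((f ^ k) x) = 0 := by
        rw [← Module.End.mul_apply, ← pow_add]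
        rw [show p + 1 + k = p + (k + 1) by ring]
        exact hx
      have hmem : (f ^ k) x ∈ LinearMap.ker (f ^ p) := h ▸ (LinearMap.mem_ker.mpr hx')
      rw [LinearMap.mem_ker] at hmem
      rw [pow_add, Module.End.mul_apply]
      exact hmem
    · exact ker_pow_mono f (Nat.le_add_right p (k+1))

lemma range_stab {p : ℕ} (h : LinearMap.range (f ^ (p+1)) = LinearMap.range (f ^ p)) :
    ∀ k, LinearMap.range (f ^ (p + k)) = LinearMap.range (f ^ p) := by
  intro k
  induction k with
  | zero => rfl
  | succ k ih =>
    refine le_antisymm (range_pow_anti f (Nat.le_add_right p (k+1))) ?_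
    intro y hy
    rw [← ih] at hy
    obtain ⟨x, rfl⟩ := hy
    have hmem : (f ^ p) x ∈ LinearMap.range (f ^ (p+1)) := by
      rw [h]; exact ⟨x, rfl⟩
    obtain ⟨z, hz⟩ := hmem
    refine ⟨z, ?_⟩
    rw [show p + (k+1) = k + (p + 1) by ring, pow_add, Module.End.mul_apply, hz,
      ← Module.End.mul_apply, ← pow_add, show p + k = k + p by ring]

lemma lemA (n : ℕ) :
    Module.rank ℂ (LinearMap.ker (f ^ (n+1))) =
      Module.rank ℂ ↥(LinearMap.ker (f ^ n) ⊓ LinearMap.range f)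
        + Module.rank ℂ (LinearMap.ker f) := by
  have hle : LinearMap.ker f ≤ LinearMap.ker (f ^ (n+1)) := by
    intro x hx
    rw [LinearMap.mem_ker] at *
    rw [pow_succ, Module.End.mul_apply, hx, map_zero]
  set g : ↥(LinearMap.ker (f ^ (n+1))) →ₗ[ℂ] X :=
    f ∘ₗ (LinearMap.ker (f ^ (n+1))).subtype with hg
  have hrange : LinearMap.range g = LinearMap.ker (f ^ n) ⊓ LinearMap.range f := by
    ext y
    rw [Submodule.mem_inf]
    constructor
    · rintro ⟨⟨x, hx⟩, rfl⟩
      rw [LinearMap.mem_ker] at hx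
      constructor
      · rw [LinearMap.mem_ker]
        show (f ^ n) (g ⟨x, _⟩) = 0
        simp only [hg, LinearMap.comp_apply, Submodule.coe_subtype]
        rw [← Module.End.mul_apply, ← pow_succ]
        exact hx
      · exact ⟨x, rfl⟩
    · rintro ⟨hy1, ⟨x, rfl⟩⟩
      rw [LinearMap.mem_ker] at hy1
      have hx : x ∈ LinearMap.ker (f ^ (n+1)) := by
        rw [LinearMap.mem_ker, pow_succ, Module.End.mul_apply]
        exact hy1
      exact ⟨⟨x, hx⟩, rfl⟩
  have hker : LinearMap.ker g = comap (LinearMap.ker (f ^ (n+1))).subtype (LinearMap.ker f) :=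
    LinearMap.ker_comp _ _
  have h := LinearMap.rank_range_add_rank_ker g
  rw [hrange, hker] at h
  rw [← h, (Submodule.comapSubtypeEquivOfLe hle).rank_eq]

lemma lemC (n : ℕ) :
    Module.rank ℂ (LinearMap.ker (f ^ n)) =
      Module.rank ℂ ↥(Submodule.map (LinearMap.range f).mkQ (LinearMap.ker (f ^ n)))
        + Module.rank ℂ ↥(LinearMap.ker (f ^ n) ⊓ LinearMap.range f) := by
  set h : ↥(LinearMap.ker (f ^ n)) →ₗ[ℂ] X ⧸ LinearMap.range f :=
    (LinearMap.range f).mkQ ∘ₗ (LinearMap.ker (f ^ n)).subtype with hh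
  have hrange : LinearMap.range h = Submodule.map (LinearMap.range f).mkQ (LinearMap.ker (f ^ n)) := by
    rw [hh, LinearMap.range_comp, Submodule.range_subtype]
  have hker : LinearMap.ker h = comap (LinearMap.ker (f ^ n)).subtype (LinearMap.range f) := by
    rw [hh, LinearMap.ker_comp, Submodule.ker_mkQ]
  have H := LinearMap.rank_range_add_rank_ker h
  rw [hrange, hker] at H
  have h2 : Module.rank ℂ ↥(comap (LinearMap.ker (f ^ n)).subtype (LinearMap.range f))
      = Module.rank ℂ ↥(LinearMap.ker (f ^ n) ⊓ LinearMap.range f) := by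
    have heq : comap (LinearMap.ker (f ^ n)).subtype (LinearMap.range f)
        = comap (LinearMap.ker (f ^ n)).subtype (LinearMap.range f ⊓ LinearMap.ker (f ^ n)) := by
      ext x; simp [Submodule.mem_comap, x.2]
    rw [heq, (Submodule.comapSubtypeEquivOfLe inf_le_right).rank_eq, inf_comm]
  rw [← H, h2]

lemma map_mkQ_range_eq_bot :
    Submodule.map (LinearMap.range f).mkQ (LinearMap.range f) = ⊥ := by
  rw [eq_bot_iff]
  rintro y ⟨x, hx, rfl⟩
  simp only [Submodule.mem_bot, Submodule.mkQ_apply, Submodule.Quotient.mk_eq_zero]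
  exact hx

lemma lemD (n : ℕ) :
    Module.rank ℂ (X ⧸ LinearMap.range f) =
      Module.rank ℂ ↥(Submodule.map (LinearMap.range f).mkQ (LinearMap.ker (f ^ n)))
        + Module.rank ℂ (X ⧸ (LinearMap.ker (f ^ n) ⊔ LinearMap.range f)) := by
  have hle : LinearMap.range f ≤ LinearMap.ker (f ^ n) ⊔ LinearMap.range f := le_sup_right
  have e1 := Submodule.quotientQuotientEquivQuotient (LinearMap.range f)
      (LinearMap.ker (f ^ n) ⊔ LinearMap.range f) hle
  have H := Submodule.rank_quotient_add_rank
    (Submodule.map (LinearMap.range f).mkQ (LinearMap.ker (f ^ n) ⊔ LinearMap.range f))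
  rw [e1.rank_eq] at H
  have hmap : Submodule.map (LinearMap.range f).mkQ (LinearMap.ker (f ^ n) ⊔ LinearMap.range f)
      = Submodule.map (LinearMap.range f).mkQ (LinearMap.ker (f ^ n)) := by
    rw [Submodule.map_sup, map_mkQ_range_eq_bot, sup_bot_eq]
  rw [hmap] at H
  rw [← H, add_comm]

lemma lemB (n : ℕ) :
    Module.rank ℂ (X ⧸ LinearMap.range (f ^ (n+1))) =
      Module.rank ℂ (X ⧸ LinearMap.range (f ^ n))
        + Module.rank ℂ (X ⧸ (LinearMap.ker (f ^ n) ⊔ LinearMap.range f)) := by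
  have hle : LinearMap.range (f ^ (n+1)) ≤ LinearMap.range (f ^ n) := by
    rintro y ⟨x, rfl⟩
    exact ⟨f x, by rw [pow_succ, Module.End.mul_apply]⟩
  have e1 := Submodule.quotientQuotientEquivQuotient (LinearMap.range (f ^ (n+1)))
      (LinearMap.range (f ^ n)) hle
  have H := Submodule.rank_quotient_add_rank
    (Submodule.map (LinearMap.range (f ^ (n+1))).mkQ (LinearMap.range (f ^ n)))
  rw [e1.rank_eq] at H
  set g : X →ₗ[ℂ] X ⧸ LinearMap.range (f ^ (n+1)) :=
    (LinearMap.range (f ^ (n+1))).mkQ ∘ₗ (f ^ n) with hg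
  have hrange : LinearMap.range g
      = Submodule.map (LinearMap.range (f ^ (n+1))).mkQ (LinearMap.range (f ^ n)) := by
    rw [hg, LinearMap.range_comp]
  have hker : LinearMap.ker g = LinearMap.ker (f ^ n) ⊔ LinearMap.range f := by
    ext x
    rw [hg, LinearMap.mem_ker, LinearMap.comp_apply, Submodule.mkQ_apply,
      Submodule.Quotient.mk_eq_zero]
    constructor
    · rintro ⟨y, hy⟩
      rw [Submodule.mem_sup]
      refine ⟨x - f y, ?_, f y, ⟨y, rfl⟩, by abel⟩
      rw [LinearMap.mem_ker, map_sub, ← hy, pow_succ, Module.End.mul_apply, sub_self]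
    · intro hx
      rw [Submodule.mem_sup] at hx
      obtain ⟨a, ha, b, ⟨y, rfl⟩, rfl⟩ := hx
      rw [LinearMap.mem_ker] at ha
      refine ⟨y, ?_⟩
      rw [map_add, ha, zero_add, pow_succ, Module.End.mul_apply]
  have e2 := (LinearMap.quotKerEquivRange g).rank_eq
  rw [hker, hrange] at e2
  rw [← H, ← e2, add_comm]

lemma rank_ker_pow_lt (hfa : Module.rank ℂ (LinearMap.ker f) < ℵ₀) (n : ℕ) :
    Module.rank ℂ (LinearMap.ker (f ^ n)) < ℵ₀ := by
  induction n with
  | zero =>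
    have h1 : LinearMap.ker (f ^ 0) = ⊥ := by rw [pow_zero, Module.End.one_eq_id, LinearMap.ker_id]
    rw [h1, rank_bot]
    exact aleph0_pos
  | succ n ih =>
    rw [lemA]
    exact add_lt_aleph0 (lt_of_le_of_lt (Submodule.rank_mono inf_le_left) ih) hfa

lemma index_all (hfa : Module.rank ℂ (LinearMap.ker f) < ℵ₀)
    (heq : Module.rank ℂ (LinearMap.ker f) = Module.rank ℂ (X ⧸ LinearMap.range f)) :
    ∀ n : ℕ, Module.rank ℂ (LinearMap.ker (f ^ n)) = Module.rank ℂ (X ⧸ LinearMap.range (f ^ n))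
      ∧ Module.rank ℂ (LinearMap.ker (f ^ n)) < ℵ₀
      ∧ Module.rank ℂ (X ⧸ LinearMap.range (f ^ n)) < ℵ₀ := by
  have hfb : Module.rank ℂ (X ⧸ LinearMap.range f) < ℵ₀ := heq ▸ hfa
  intro n
  induction n with
  | zero =>
    have h1 : LinearMap.ker (f ^ 0) = ⊥ := by rw [pow_zero, Module.End.one_eq_id, LinearMap.ker_id]
    have h2 : LinearMap.range (f ^ 0) = ⊤ := by rw [pow_zero, Module.End.one_eq_id, LinearMap.range_id]
    have hs : Subsingleton (X ⧸ LinearMap.range (f ^ 0)) := by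
      rw [Submodule.Quotient.subsingleton_iff]; exact h2
    have e0 : Module.rank ℂ (LinearMap.ker (f ^ 0)) = 0 := by rw [h1, rank_bot]
    have e0' : Module.rank ℂ (X ⧸ LinearMap.range (f ^ 0)) = 0 := rank_subsingleton' ℂ _
    rw [e0, e0']
    exact ⟨rfl, aleph0_pos, aleph0_pos⟩
  | succ n ih =>
    obtain ⟨ihe, iha, ihb⟩ := ih
    have hkfin : Module.rank ℂ ↥(LinearMap.ker (f ^ n) ⊓ LinearMap.range f) < ℵ₀ :=
      lt_of_le_of_lt (Submodule.rank_mono inf_le_left) iha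
    have hdfin : Module.rank ℂ (X ⧸ (LinearMap.ker (f ^ n) ⊔ LinearMap.range f)) < ℵ₀ := by
      refine lt_of_le_of_lt ?_ hfb
      rw [lemD f n]; exact self_le_add_left _ _
    refine ⟨?_, ?_, ?_⟩
    · calc Module.rank ℂ (LinearMap.ker (f ^ (n+1)))
          = Module.rank ℂ ↥(LinearMap.ker (f ^ n) ⊓ LinearMap.range f)
            + Module.rank ℂ (LinearMap.ker f) := lemA f n
        _ = Module.rank ℂ ↥(LinearMap.ker (f ^ n) ⊓ LinearMap.range f)
            + Module.rank ℂ (X ⧸ LinearMap.range f) := by rw [heq]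
        _ = Module.rank ℂ ↥(LinearMap.ker (f ^ n) ⊓ LinearMap.range f)
            + (Module.rank ℂ ↥(Submodule.map (LinearMap.range f).mkQ (LinearMap.ker (f ^ n)))
              + Module.rank ℂ (X ⧸ (LinearMap.ker (f ^ n) ⊔ LinearMap.range f))) := by rw [← lemD f n]
        _ = (Module.rank ℂ ↥(Submodule.map (LinearMap.range f).mkQ (LinearMap.ker (f ^ n)))
              + Module.rank ℂ ↥(LinearMap.ker (f ^ n) ⊓ LinearMap.range f))
            + Module.rank ℂ (X ⧸ (LinearMap.ker (f ^ n) ⊔ LinearMap.range f)) := by ring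
        _ = Module.rank ℂ (LinearMap.ker (f ^ n))
            + Module.rank ℂ (X ⧸ (LinearMap.ker (f ^ n) ⊔ LinearMap.range f)) := by rw [← lemC f n]
        _ = Module.rank ℂ (X ⧸ LinearMap.range (f ^ n))
            + Module.rank ℂ (X ⧸ (LinearMap.ker (f ^ n) ⊔ LinearMap.range f)) := by rw [ihe]
        _ = Module.rank ℂ (X ⧸ LinearMap.range (f ^ (n+1))) := (lemB f n).symm
    · rw [lemA]; exact add_lt_aleph0 hkfin hfa
    · rw [lemB]; exact add_lt_aleph0 ihb hdfin

lemma descent_of_index (hfa : Module.rank ℂ (LinearMap.ker f) < ℵ₀)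
    (heq : Module.rank ℂ (LinearMap.ker f) = Module.rank ℂ (X ⧸ LinearMap.range f))
    {p : ℕ} (hk : LinearMap.ker (f ^ p) = LinearMap.ker (f ^ (p+1))) :
    LinearMap.range (f ^ p) = LinearMap.range (f ^ (p+1)) := by
  obtain ⟨he1, _, hb1⟩ := index_all f hfa heq p
  obtain ⟨he2, _, _⟩ := index_all f hfa heq (p+1)
  have hbb : Module.rank ℂ (X ⧸ LinearMap.range (f ^ (p+1)))
      = Module.rank ℂ (X ⧸ LinearMap.range (f ^ p)) := by
    rw [← he2, ← hk, he1]
  have hB := lemB f p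
  rw [hbb] at hB
  have hd0 : Module.rank ℂ (X ⧸ (LinearMap.ker (f ^ p) ⊔ LinearMap.range f)) = 0 := by
    have := hB
    nth_rewrite 1 [show Module.rank ℂ (X ⧸ LinearMap.range (f ^ p))
      = Module.rank ℂ (X ⧸ LinearMap.range (f ^ p)) + 0 by rw [add_zero]] at this
    exact (Cardinal.eq_of_add_eq_add_left this hb1).symm
  have hsub : Subsingleton (X ⧸ (LinearMap.ker (f ^ p) ⊔ LinearMap.range f)) :=
    rank_zero_iff.mp hd0
  have hsup : LinearMap.ker (f ^ p) ⊔ LinearMap.range f = ⊤ :=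
    Submodule.Quotient.subsingleton_iff.mp hsub
  have h1 : LinearMap.range (f ^ p) = Submodule.map (f ^ p) ⊤ := (LinearMap.range_eq_map _)
  rw [← hsup, Submodule.map_sup] at h1
  have h2 : Submodule.map (f ^ p) (LinearMap.ker (f ^ p)) = ⊥ := by
    rw [eq_bot_iff]
    rintro y ⟨x, hx, rfl⟩
    simp only [SetLike.mem_coe, LinearMap.mem_ker] at hx
    simp [hx]
  have h3 : Submodule.map (f ^ p) (LinearMap.range f) = LinearMap.range (f ^ (p+1)) := by
    rw [← LinearMap.range_comp, ← Module.End.mul_eq_comp, ← pow_succ]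
  rw [h2, h3, bot_sup_eq] at h1
  exact h1

lemma beta_eq_alpha_of (p : ℕ)
    (hsup : LinearMap.ker (f ^ p) ⊔ LinearMap.range f = ⊤)
    (hk : LinearMap.ker (f ^ p) = LinearMap.ker (f ^ (p+1)))
    (hfinp : Module.rank ℂ (LinearMap.ker (f ^ p)) < ℵ₀) :
    Module.rank ℂ (X ⧸ LinearMap.range f) = Module.rank ℂ (LinearMap.ker f)
      ∧ Module.rank ℂ (X ⧸ LinearMap.range f) < ℵ₀ := by
  have hmapTop : Submodule.map (LinearMap.range f).mkQ (LinearMap.ker (f ^ p)) = ⊤ := by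
    have h := congrArg (Submodule.map (LinearMap.range f).mkQ) hsup
    rw [Submodule.map_sup, map_mkQ_range_eq_bot, sup_bot_eq, Submodule.map_top,
      Submodule.range_mkQ] at h
    exact h
  have he : Module.rank ℂ ↥(Submodule.map (LinearMap.range f).mkQ (LinearMap.ker (f ^ p)))
      = Module.rank ℂ (X ⧸ LinearMap.range f) := by
    rw [hmapTop, rank_top]
  have hC := lemC f p
  rw [he] at hC
  have hA := lemA f p
  rw [← hk] at hA
  have hkfin : Module.rank ℂ ↥(LinearMap.ker (f ^ p) ⊓ LinearMap.range f) < ℵ₀ :=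
    lt_of_le_of_lt (Submodule.rank_mono inf_le_left) hfinp
  have hmain : Module.rank ℂ ↥(LinearMap.ker (f ^ p) ⊓ LinearMap.range f)
        + Module.rank ℂ (X ⧸ LinearMap.range f)
      = Module.rank ℂ ↥(LinearMap.ker (f ^ p) ⊓ LinearMap.range f)
        + Module.rank ℂ (LinearMap.ker f) := by
    rw [add_comm _ (Module.rank ℂ (X ⧸ LinearMap.range f)), ← hC, hA]
  refine ⟨Cardinal.eq_of_add_eq_add_left hmain hkfin, ?_⟩
  have : Module.rank ℂ (X ⧸ LinearMap.range f) ≤ Module.rank ℂ (LinearMap.ker (f ^ p)) := by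
    rw [hC]; exact self_le_add_right _ _
  exact lt_of_le_of_lt this hfinp

lemma pole_decomp
    (hasc : ∃ p₀, LinearMap.ker (f ^ p₀) = LinearMap.ker (f ^ (p₀+1)))
    (hdes : ∃ q₀, LinearMap.range (f ^ (q₀+1)) = LinearMap.range (f ^ q₀)) :
    ∃ p : ℕ, 1 ≤ p
      ∧ (∀ k, LinearMap.ker (f ^ (p + k)) = LinearMap.ker (f ^ p))
      ∧ (∀ k, LinearMap.range (f ^ (p + k)) = LinearMap.range (f ^ p))
      ∧ LinearMap.ker (f ^ p) ⊓ LinearMap.range (f ^ p) = ⊥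
      ∧ LinearMap.ker (f ^ p) ⊔ LinearMap.range (f ^ p) = ⊤ := by
  obtain ⟨p₀, hp₀⟩ := hasc
  obtain ⟨q₀, hq₀⟩ := hdes
  set p := p₀ + q₀ + 1 with hp
  have hkall : ∀ k, LinearMap.ker (f ^ (p + k)) = LinearMap.ker (f ^ p) := by
    intro k
    have h1 := ker_stab f hp₀ (q₀ + 1 + k)
    have h2 := ker_stab f hp₀ (q₀ + 1)
    rw [show p₀ + (q₀ + 1 + k) = p + k by omega] at h1
    rw [show p₀ + (q₀ + 1) = p by omega] at h2
    rw [h1, h2]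
  have hrall : ∀ k, LinearMap.range (f ^ (p + k)) = LinearMap.range (f ^ p) := by
    intro k
    have h1 := range_stab f hq₀ (p₀ + 1 + k)
    have h2 := range_stab f hq₀ (p₀ + 1)
    rw [show q₀ + (p₀ + 1 + k) = p + k by omega] at h1
    rw [show q₀ + (p₀ + 1) = p by omega] at h2
    rw [h1, h2]
  refine ⟨p, by omega, hkall, hrall, ?_, ?_⟩
  · rw [eq_bot_iff]
    rintro x ⟨hx1, hx2⟩
    rw [SetLike.mem_coe, LinearMap.mem_ker] at hx1
    rw [SetLike.mem_coe, LinearMap.mem_range] at hx2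
    obtain ⟨y, rfl⟩ := hx2
    have : y ∈ LinearMap.ker (f ^ (p + p)) := by
      rw [LinearMap.mem_ker, pow_add, Module.End.mul_apply]
      exact hx1
    rw [hkall p, LinearMap.mem_ker] at this
    simp [Submodule.mem_bot, this]
  · rw [eq_top_iff]
    intro x _
    have hx : (f ^ p) x ∈ LinearMap.range (f ^ (p + p)) := by
      rw [hrall p]
      exact ⟨x, rfl⟩
    obtain ⟨y, hy⟩ := hx
    rw [Submodule.mem_sup]
    refine ⟨x - (f ^ p) y, ?_, (f ^ p) y, ⟨y, rfl⟩, by abel⟩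
    rw [LinearMap.mem_ker, map_sub, sub_eq_zero, ← Module.End.mul_apply, ← pow_add]
    exact hy.symm

end Alg


section CLM
variable (S : X →L[ℂ] X)

lemma clm_ker_pow (n : ℕ) :
    LinearMap.ker ((S ^ n : X →L[ℂ] X) : X →ₗ[ℂ] X) = LinearMap.ker ((S : X →ₗ[ℂ] X) ^ n) := by
  ext x
  simp only [LinearMap.mem_ker, Module.End.pow_apply]
  rw [ContinuousLinearMap.coe_pow]
  rw [Module.End.pow_apply]

lemma clm_range_pow (n : ℕ) :
    LinearMap.range ((S ^ n : X →L[ℂ] X) : X →ₗ[ℂ] X) = LinearMap.range ((S : X →ₗ[ℂ] X) ^ n) := by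
  ext x
  simp only [LinearMap.mem_range, Module.End.pow_apply]
  rw [ContinuousLinearMap.coe_pow]
  simp only [Module.End.pow_apply]

lemma clm_ker_one : LinearMap.ker (S : X →ₗ[ℂ] X) = LinearMap.ker (S : X →ₗ[ℂ] X) := rfl

lemma clm_range_one : LinearMap.range (S : X →ₗ[ℂ] X) = LinearMap.range (S : X →ₗ[ℂ] X) := rfl

lemma boundedBelow_injective {S : X →L[ℂ] X} (h : boundedBelow S) : Function.Injective S := by
  obtain ⟨c, hc, hb⟩ := h
  intro x y hxy
  have h0 : S (x - y) = 0 := by rw [map_sub, hxy, sub_self]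
  have := hb (x - y)
  rw [h0, norm_zero] at this
  have hn : ‖x - y‖ ≤ 0 := by
    by_contra hcon
    push_neg at hcon
    nlinarith
  have : x - y = 0 := by
    rw [← norm_le_zero_iff]
    exact hn
  rw [sub_eq_zero] at this
  exact this

lemma boundedBelow_isClosed_range [CompleteSpace X] {S : X →L[ℂ] X} (h : boundedBelow S) :
    IsClosed (LinearMap.range (S : X →ₗ[ℂ] X) : Set X) := by
  obtain ⟨c, hc, hb⟩ := h
  have hal : AntilipschitzWith (c⁻¹).toNNReal ⇑S := by
    apply AntilipschitzWith.of_le_mul_dist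
    intro x y
    rw [dist_eq_norm, dist_eq_norm, ← map_sub]
    have h1 := hb (x - y)
    rw [Real.coe_toNNReal _ (le_of_lt (inv_pos.mpr hc))]
    have h2 := mul_le_mul_of_nonneg_left h1 (inv_pos.mpr hc).le
    rwa [← mul_assoc, inv_mul_cancel₀ hc.ne', one_mul] at h2
  have hcl := hal.isClosed_range S.uniformContinuous
  convert hcl using 1
  exact LinearMap.coe_range _

lemma isUnit_boundedBelow [Nontrivial X] {S : X →L[ℂ] X} (h : IsUnit S) : boundedBelow S := by
  obtain ⟨u, rfl⟩ := h
  set V : X →L[ℂ] X := ↑u⁻¹ with hV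
  have hcomp : V * (u : X →L[ℂ] X) = 1 := u.inv_mul
  have hid : ∀ x, V ((u : X →L[ℂ] X) x) = x := by
    intro x
    calc V ((u : X →L[ℂ] X) x) = (V * (u : X →L[ℂ] X)) x := rfl
      _ = (1 : X →L[ℂ] X) x := by rw [hcomp]
      _ = x := rfl
  have hVne : V ≠ 0 := by
    intro h0
    obtain ⟨x0, hx0⟩ := exists_ne (0 : X)
    apply hx0
    have := hid x0
    rw [h0] at this
    simpa using this.symm
  have hVpos : 0 < ‖V‖ := by
    rw [norm_pos_iff]
    exact hVne
  refine ⟨‖V‖⁻¹, inv_pos.mpr hVpos, fun x => ?_⟩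
  have h1 : ‖x‖ ≤ ‖V‖ * ‖(u : X →L[ℂ] X) x‖ := by
    conv_lhs => rw [← hid x]
    exact V.le_opNorm _
  have h2 := mul_le_mul_of_nonneg_left h1 (inv_pos.mpr hVpos).le
  rwa [← mul_assoc, inv_mul_cancel₀ hVpos.ne', one_mul] at h2

lemma bijective_isUnit [CompleteSpace X] {S : X →L[ℂ] X}
    (h1 : LinearMap.ker (S : X →ₗ[ℂ] X) = ⊥) (h2 : LinearMap.range (S : X →ₗ[ℂ] X) = ⊤) : IsUnit S := by
  set e := ContinuousLinearEquiv.ofBijective S h1 h2 with he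
  have hce : ⇑e = ⇑S := by rw [he]; rfl
  refine ⟨⟨S, (e.symm : X →L[ℂ] X), ?_, ?_⟩, rfl⟩
  · ext x
    show S ((e.symm : X →L[ℂ] X) x) = x
    rw [show (e.symm : X →L[ℂ] X) x = e.symm x from rfl, ← hce]
    exact e.apply_symm_apply x
  · ext x
    show (e.symm : X →L[ℂ] X) (S x) = x
    rw [show (e.symm : X →L[ℂ] X) (S x) = e.symm (S x) from rfl, ← hce]
    exact e.symm_apply_apply x

lemma closed_range_pow [CompleteSpace X] (S : X →L[ℂ] X) (p : ℕ)
    (hker : LinearMap.ker ((S ^ (p + p) : X →L[ℂ] X) : X →ₗ[ℂ] X) ≤ LinearMap.ker ((S ^ p : X →L[ℂ] X) : X →ₗ[ℂ] X))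
    (hsup : LinearMap.ker ((S ^ p : X →L[ℂ] X) : X →ₗ[ℂ] X) ⊔ LinearMap.range ((S ^ p : X →L[ℂ] X) : X →ₗ[ℂ] X) = ⊤) :
    IsClosed ((LinearMap.range ((S ^ p : X →L[ℂ] X) : X →ₗ[ℂ] X) : Submodule ℂ X) : Set X) := by
  set N : Submodule ℂ X := LinearMap.ker ((S ^ p : X →L[ℂ] X) : X →ₗ[ℂ] X) with hN
  have hNc : IsClosed (N : Set X) := ContinuousLinearMap.isClosed_ker (S ^ p)
  haveI : CompleteSpace N := hNc.completeSpace_coe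
  set phi : (X × N) →L[ℂ] X :=
    (S ^ p).comp (ContinuousLinearMap.fst ℂ X N)
      + N.subtypeL.comp (ContinuousLinearMap.snd ℂ X N) with hphi
  have hphiap : ∀ (x : X) (n : N), phi (x, n) = (S ^ p) x + ↑n := fun _ _ => rfl
  have hsurj : Function.Surjective ⇑phi := by
    intro y
    have hy : y ∈ LinearMap.ker ((S ^ p : X →L[ℂ] X) : X →ₗ[ℂ] X) ⊔ LinearMap.range ((S ^ p : X →L[ℂ] X) : X →ₗ[ℂ] X) := by rw [hsup]; trivial
    rw [Submodule.mem_sup] at hy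
    obtain ⟨a, ha, b, ⟨x, rfl⟩, rfl⟩ := hy
    exact ⟨(x, ⟨a, ha⟩), by rw [hphiap]; apply add_comm⟩
  have hkey : ∀ (x : X) (n : N), phi (x, n) ∈ LinearMap.range ((S ^ p : X →L[ℂ] X) : X →ₗ[ℂ] X) → (n : X) = 0 := by
    intro x n hmem
    obtain ⟨z, hz⟩ := hmem
    have hn : (n : X) = (S ^ p) (z - x) := by
      rw [map_sub]
      rw [hphiap] at hz
      rw [show (S ^ p) z = _ from hz]
      abel
    have hn2 : z - x ∈ LinearMap.ker ((S ^ (p + p) : X →L[ℂ] X) : X →ₗ[ℂ] X) := by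
      rw [LinearMap.mem_ker, ContinuousLinearMap.coe_coe, pow_add, ContinuousLinearMap.mul_apply, ← hn]
      exact n.2
    have := hker hn2
    rw [LinearMap.mem_ker, ContinuousLinearMap.coe_coe] at this
    rw [hn, this]
  rw [← isOpen_compl_iff]
  have himg : ((LinearMap.range ((S ^ p : X →L[ℂ] X) : X →ₗ[ℂ] X) : Submodule ℂ X) : Set X)ᶜ
      = phi '' {q : X × N | q.2 ≠ 0} := by
    ext y
    constructor
    · intro hy
      obtain ⟨⟨x, n⟩, rfl⟩ := hsurj y
      refine ⟨(x, n), ?_, rfl⟩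
      intro hn0
      apply hy
      show phi (x, n) ∈ (LinearMap.range ((S ^ p : X →L[ℂ] X) : X →ₗ[ℂ] X) : Submodule ℂ X)
      refine ⟨x, ?_⟩
      rw [hphiap, show n = 0 from hn0]
      simp [Module.End.pow_apply]
    · rintro ⟨⟨x, n⟩, hn, rfl⟩
      intro hy
      exact hn (Subtype.coe_injective (hkey x n hy))
  rw [himg]
  apply phi.isOpenMap hsurj
  have : {q : X × N | q.2 ≠ 0} = (Prod.snd) ⁻¹' ({0}ᶜ : Set N) := rfl
  rw [this]
  exact isOpen_compl_singleton.preimage continuous_snd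

variable [CompleteSpace X]

lemma bb_isUSW {S : X →L[ℂ] X} (h : boundedBelow S) : isUSW S := by
  have hker : LinearMap.ker (S : X →ₗ[ℂ] X) = ⊥ := LinearMap.ker_eq_bot.mpr (boundedBelow_injective h)
  have ha : alpha S = 0 := by unfold alpha; rw [hker, rank_bot]
  exact ⟨by rw [ha]; exact aleph0_pos, boundedBelow_isClosed_range h, by rw [ha]; exact zero_le⟩

lemma isUnit_isWeyl {S : X →L[ℂ] X} (h : IsUnit S) : isWeyl S := by
  obtain ⟨u, rfl⟩ := h
  have hinj : Function.Injective ⇑(u : X →L[ℂ] X) := by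
    intro x y hxy
    have h1 : ((↑u⁻¹ : X →L[ℂ] X) * ↑u) x = ((↑u⁻¹ : X →L[ℂ] X) * ↑u) y := by
      show (↑u⁻¹ : X →L[ℂ] X) ((u : X →L[ℂ] X) x) = (↑u⁻¹ : X →L[ℂ] X) ((u : X →L[ℂ] X) y)
      rw [hxy]
    rwa [u.inv_mul] at h1
  have hsurj : Function.Surjective ⇑(u : X →L[ℂ] X) := by
    intro y
    refine ⟨(↑u⁻¹ : X →L[ℂ] X) y, ?_⟩
    have : ((u : X →L[ℂ] X) * ↑u⁻¹) y = (1 : X →L[ℂ] X) y := by rw [u.mul_inv]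
    exact this
  have hker : LinearMap.ker ((u : X →L[ℂ] X) : X →ₗ[ℂ] X) = ⊥ := LinearMap.ker_eq_bot.mpr hinj
  have hran : LinearMap.range ((u : X →L[ℂ] X) : X →ₗ[ℂ] X) = ⊤ := LinearMap.range_eq_top.mpr hsurj
  have ha : alpha (u : X →L[ℂ] X) = 0 := by unfold alpha; rw [hker, rank_bot]
  have hb : beta (u : X →L[ℂ] X) = 0 := by
    unfold beta
    haveI : Subsingleton (X ⧸ LinearMap.range ((u : X →L[ℂ] X) : X →ₗ[ℂ] X)) :=
      Submodule.Quotient.subsingleton_iff.mpr hran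
    exact rank_subsingleton' ℂ _
  refine ⟨by rw [ha]; exact aleph0_pos, by rw [hb]; exact aleph0_pos, ?_, by rw [ha, hb]⟩
  rw [hran]
  exact isClosed_univ

lemma isWeyl_isUSW {S : X →L[ℂ] X} (h : isWeyl S) : isUSW S :=
  ⟨h.1, h.2.2.1, le_of_eq h.2.2.2⟩

lemma weyl_bb_isUnit {S : X →L[ℂ] X} (hW : isWeyl S) (hb : boundedBelow S) : IsUnit S := by
  have hker : LinearMap.ker (S : X →ₗ[ℂ] X) = ⊥ := LinearMap.ker_eq_bot.mpr (boundedBelow_injective hb)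
  have ha : alpha S = 0 := by unfold alpha; rw [hker, rank_bot]
  have hb0 : beta S = 0 := by rw [← hW.2.2.2, ha]
  have hsub : Subsingleton (X ⧸ LinearMap.range (S : X →ₗ[ℂ] X)) := rank_zero_iff.mp hb0
  have hran : LinearMap.range (S : X →ₗ[ℂ] X) = ⊤ := Submodule.Quotient.subsingleton_iff.mp hsub
  exact bijective_isUnit hker hran

lemma weyl_finAsc_finDesc {S : X →L[ℂ] X} (hW : isWeyl S) (hA : finAsc S) : finDesc S := by
  obtain ⟨p, hp⟩ := hA
  set f : X →ₗ[ℂ] X := (S : X →ₗ[ℂ] X) with hf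
  have hfa : Module.rank ℂ (LinearMap.ker f) < ℵ₀ := by
    rw [← clm_ker_one]; exact hW.1
  have heq : Module.rank ℂ (LinearMap.ker f) = Module.rank ℂ (X ⧸ LinearMap.range f) := by
    rw [← clm_ker_one, ← clm_range_one]; exact hW.2.2.2
  rw [clm_ker_pow, clm_ker_pow] at hp
  have hr := descent_of_index f hfa heq hp
  refine ⟨p, ?_⟩
  rw [clm_range_pow, clm_range_pow, hr]

lemma usw_pole_isWeyl {S : X →L[ℂ] X} (hU : isUSW S) (hA : finAsc S) (hD : finDesc S) :
    isWeyl S := by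
  set f : X →ₗ[ℂ] X := (S : X →ₗ[ℂ] X) with hf
  obtain ⟨p₀, hp₀⟩ := hA
  obtain ⟨q₀, hq₀⟩ := hD
  rw [clm_ker_pow, clm_ker_pow] at hp₀
  rw [clm_range_pow, clm_range_pow] at hq₀
  obtain ⟨p, hp1, hkall, hrall, hinf, hsupp⟩ := pole_decomp f ⟨p₀, hp₀⟩ ⟨q₀, hq₀.symm⟩
  have hfa : Module.rank ℂ (LinearMap.ker f) < ℵ₀ := by
    rw [← clm_ker_one]; exact hU.1
  have hrle : LinearMap.range (f ^ p) ≤ LinearMap.range f := by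
    have h1 : LinearMap.range (f ^ p) ≤ LinearMap.range (f ^ 1) := range_pow_anti f hp1
    rwa [pow_one] at h1
  have hsup1 : LinearMap.ker (f ^ p) ⊔ LinearMap.range f = ⊤ := by
    rw [eq_top_iff, ← hsupp]
    exact sup_le_sup_left hrle _
  have hk : LinearMap.ker (f ^ p) = LinearMap.ker (f ^ (p+1)) := (hkall 1).symm
  have hfinp : Module.rank ℂ (LinearMap.ker (f ^ p)) < ℵ₀ := rank_ker_pow_lt f hfa p
  obtain ⟨hbe, hbfin⟩ := beta_eq_alpha_of f p hsup1 hk hfinp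
  refine ⟨hU.1, ?_, hU.2.1, ?_⟩
  · show Module.rank ℂ (X ⧸ LinearMap.range (S : X →ₗ[ℂ] X)) < ℵ₀
    rw [clm_range_one]
    exact hbfin
  · show Module.rank ℂ (LinearMap.ker (S : X →ₗ[ℂ] X)) = Module.rank ℂ (X ⧸ LinearMap.range (S : X →ₗ[ℂ] X))
    rw [clm_ker_one, clm_range_one]
    exact hbe.symm

lemma ker_pow_bot {f : X →ₗ[ℂ] X} (hinj : Function.Injective f) (p : ℕ) :
    LinearMap.ker (f ^ p) = ⊥ := by
  induction p with
  | zero => rw [pow_zero, Module.End.one_eq_id, LinearMap.ker_id]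
  | succ n ih =>
    rw [eq_bot_iff]
    intro x hx
    rw [LinearMap.mem_ker, pow_succ', Module.End.mul_apply] at hx
    have h0 : f ((f ^ n) x) = f 0 := by rw [hx, map_zero]
    have h1 : (f ^ n) x = 0 := hinj h0
    have : x ∈ LinearMap.ker (f ^ n) := LinearMap.mem_ker.mpr h1
    rw [ih] at this
    exact this

lemma pole_isLD {S : X →L[ℂ] X} (hA : finAsc S) (hD : finDesc S) : isLD S := by
  set f : X →ₗ[ℂ] X := (S : X →ₗ[ℂ] X) with hf
  obtain ⟨p₀, hp₀⟩ := hA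
  obtain ⟨q₀, hq₀⟩ := hD
  rw [clm_ker_pow, clm_ker_pow] at hp₀
  rw [clm_range_pow, clm_range_pow] at hq₀
  obtain ⟨p, hp1, hkall, hrall, hinf, hsupp⟩ := pole_decomp f ⟨p₀, hp₀⟩ ⟨q₀, hq₀.symm⟩
  refine ⟨p, ?_, ?_⟩
  · rw [clm_ker_pow, clm_ker_pow]
    exact (hkall 1).symm
  · have hkerle : LinearMap.ker ((S ^ (p + p) : X →L[ℂ] X) : X →ₗ[ℂ] X) ≤ LinearMap.ker ((S ^ p : X →L[ℂ] X) : X →ₗ[ℂ] X) := by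
      rw [clm_ker_pow, clm_ker_pow]
      exact le_of_eq (hkall p)
    have hsupc : LinearMap.ker ((S ^ p : X →L[ℂ] X) : X →ₗ[ℂ] X) ⊔ LinearMap.range ((S ^ p : X →L[ℂ] X) : X →ₗ[ℂ] X) = ⊤ := by
      rw [clm_ker_pow, clm_range_pow]
      exact hsupp
    have hcl := closed_range_pow S p hkerle hsupc
    have heq : LinearMap.range ((S ^ (p + 1) : X →L[ℂ] X) : X →ₗ[ℂ] X) = LinearMap.range ((S ^ p : X →L[ℂ] X) : X →ₗ[ℂ] X) := by
      rw [clm_range_pow, clm_range_pow]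
      exact hrall 1
    rw [show ((LinearMap.range ((S ^ (p+1) : X →L[ℂ] X) : X →ₗ[ℂ] X) : Submodule ℂ X) : Set X)
      = ((LinearMap.range ((S ^ p : X →L[ℂ] X) : X →ₗ[ℂ] X) : Submodule ℂ X) : Set X) from congrArg _ heq]
    exact hcl

lemma pole_bb_isUnit {S : X →L[ℂ] X} (hA : finAsc S) (hD : finDesc S)
    (hb : boundedBelow S) : IsUnit S := by
  have hinj := boundedBelow_injective hb
  set f : X →ₗ[ℂ] X := (S : X →ₗ[ℂ] X) with hf
  have hfinj : Function.Injective f := hinj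
  obtain ⟨p₀, hp₀⟩ := hA
  obtain ⟨q₀, hq₀⟩ := hD
  rw [clm_ker_pow, clm_ker_pow] at hp₀
  rw [clm_range_pow, clm_range_pow] at hq₀
  obtain ⟨p, hp1, hkall, hrall, hinf, hsupp⟩ := pole_decomp f ⟨p₀, hp₀⟩ ⟨q₀, hq₀.symm⟩
  have hkb : LinearMap.ker (f ^ p) = ⊥ := ker_pow_bot hfinj p
  rw [hkb, bot_sup_eq] at hsupp
  have hrle : LinearMap.range (f ^ p) ≤ LinearMap.range f := by
    have h1 : LinearMap.range (f ^ p) ≤ LinearMap.range (f ^ 1) := range_pow_anti f hp1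
    rwa [pow_one] at h1
  have hrt : LinearMap.range f = ⊤ := by
    rw [eq_top_iff, ← hsupp]
    exact hrle
  refine bijective_isUnit ?_ ?_
  · exact LinearMap.ker_eq_bot.mpr hinj
  · rw [clm_range_one]
    exact hrt

lemma nontrivial_of_infdim (hX : ¬ FiniteDimensional ℂ X) : Nontrivial X := by
  by_contra h
  rw [not_nontrivial_iff_subsingleton] at h
  exact hX (Module.Finite.of_basis (Module.Basis.empty X (ι := Fin 0)))

lemma mem_spec_iff (T : X →L[ℂ] X) (l : ℂ) : l ∈ spec T ↔ ¬ IsUnit (T - l • 1) := by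
  show l ∈ spectrum ℂ T ↔ _
  rw [spectrum.mem_iff]
  have heq : T - l • 1 = -(algebraMap ℂ (X →L[ℂ] X) l - T) := by
    rw [Algebra.algebraMap_eq_smul_one, neg_sub]
  rw [heq, IsUnit.neg_iff]

lemma ld_finAsc {S : X →L[ℂ] X} (h : isLD S) : finAsc S := by
  obtain ⟨p, h1, _⟩ := h
  exact ⟨p, h1⟩

end CLM
end Stmt15Aux


open OpSpec Cardinal

theorem stmt15 {X : Type*} [NormedAddCommGroup X] [NormedSpace ℂ X] [CompleteSpace X]
    (hX : ¬ FiniteDimensional ℂ X) (T : X →L[ℂ] X) :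
    ((propUWPi T ∧ lpoles T ∩ specUW T = ∅) ↔
        (propZPia T ∧ specW T \ specUW T = spec T \ specA T)) ∧
      ((propZPia T ∧ specW T \ specUW T = spec T \ specA T) ↔
        (propZPia T ∧ (specA T \ specUW T) ∩ specW T = ∅)) := by
  haveI : Nontrivial X := Stmt15Aux.nontrivial_of_infdim hX
  have mA : ∀ l : ℂ, l ∈ specA T ↔ ¬ boundedBelow (T - l • 1) := fun _ => Iff.rfl
  have mW : ∀ l : ℂ, l ∈ specW T ↔ ¬ isWeyl (T - l • 1) := fun _ => Iff.rfl
  have mU : ∀ l : ℂ, l ∈ specUW T ↔ ¬ isUSW (T - l • 1) := fun _ => Iff.rfl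
  have mP : ∀ l : ℂ, l ∈ poles T ↔ l ∈ spec T ∧ finAsc (T - l • 1) ∧ finDesc (T - l • 1) :=
    fun _ => Iff.rfl
  have mL : ∀ l : ℂ, l ∈ lpoles T ↔ l ∈ specA T ∧ isLD (T - l • 1) := fun _ => Iff.rfl
  have mS : ∀ l : ℂ, l ∈ spec T ↔ ¬ IsUnit (T - l • 1) := Stmt15Aux.mem_spec_iff T
  have K1 : ∀ l : ℂ, boundedBelow (T - l • 1) → isUSW (T - l • 1) :=
    fun _ => Stmt15Aux.bb_isUSW
  have K2 : ∀ l : ℂ, IsUnit (T - l • 1) → isWeyl (T - l • 1) :=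
    fun _ => Stmt15Aux.isUnit_isWeyl
  have K3 : ∀ l : ℂ, isWeyl (T - l • 1) → isUSW (T - l • 1) :=
    fun _ => Stmt15Aux.isWeyl_isUSW
  have K4 : ∀ l : ℂ, isWeyl (T - l • 1) → boundedBelow (T - l • 1) → IsUnit (T - l • 1) :=
    fun _ => Stmt15Aux.weyl_bb_isUnit
  have K5 : ∀ l : ℂ, IsUnit (T - l • 1) → boundedBelow (T - l • 1) :=
    fun _ => Stmt15Aux.isUnit_boundedBelow
  have K6 : ∀ l : ℂ, isWeyl (T - l • 1) → finAsc (T - l • 1) → finDesc (T - l • 1) :=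
    fun _ => Stmt15Aux.weyl_finAsc_finDesc
  have K7 : ∀ l : ℂ, isUSW (T - l • 1) → finAsc (T - l • 1) → finDesc (T - l • 1) →
      isWeyl (T - l • 1) := fun _ => Stmt15Aux.usw_pole_isWeyl
  have K8 : ∀ l : ℂ, finAsc (T - l • 1) → finDesc (T - l • 1) → isLD (T - l • 1) :=
    fun _ => Stmt15Aux.pole_isLD
  have K9 : ∀ l : ℂ, finAsc (T - l • 1) → finDesc (T - l • 1) → boundedBelow (T - l • 1) →
      IsUnit (T - l • 1) := fun _ => Stmt15Aux.pole_bb_isUnit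
  have K10 : ∀ l : ℂ, isLD (T - l • 1) → finAsc (T - l • 1) :=
    fun _ => Stmt15Aux.ld_finAsc
  have imp1 : (propUWPi T ∧ lpoles T ∩ specUW T = ∅) →
      (propZPia T ∧ specW T \ specUW T = spec T \ specA T) := by
    rintro ⟨hUW, hI⟩
    have hUW' : specA T \ specUW T = poles T := hUW
    constructor
    · show spec T \ specW T = lpoles T
      ext l
      constructor
      · rintro ⟨hs, hw⟩
        have hW : isWeyl (T - l • 1) := not_not.mp (fun h => hw ((mW l).mpr h))
        have hA : l ∈ specA T := by
          by_contra hc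
          have hbb : boundedBelow (T - l • 1) := not_not.mp (fun h => hc ((mA l).mpr h))
          exact (mS l).mp hs (K4 l hW hbb)
        have hU : l ∉ specUW T := fun hu => ((mU l).mp hu) (K3 l hW)
        have hp : l ∈ poles T := by rw [← hUW']; exact ⟨hA, hU⟩
        obtain ⟨-, hFA, hFD⟩ := (mP l).mp hp
        exact (mL l).mpr ⟨hA, K8 l hFA hFD⟩
      · intro hl
        obtain ⟨hA, hLD⟩ := (mL l).mp hl
        have hU : l ∉ specUW T := by
          intro hu
          have hmem : l ∈ lpoles T ∩ specUW T := ⟨hl, hu⟩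
          rw [hI] at hmem
          exact hmem
        have hp : l ∈ poles T := by rw [← hUW']; exact ⟨hA, hU⟩
        obtain ⟨hs, hFA, hFD⟩ := (mP l).mp hp
        have hUSW : isUSW (T - l • 1) := not_not.mp (fun h => hU ((mU l).mpr h))
        have hW := K7 l hUSW hFA hFD
        exact ⟨hs, fun hw => ((mW l).mp hw) hW⟩
    · show specW T \ specUW T = spec T \ specA T
      ext l
      constructor
      · rintro ⟨hw, hu⟩
        have hUSW : isUSW (T - l • 1) := not_not.mp (fun h => hu ((mU l).mpr h))
        have hnW : ¬ isWeyl (T - l • 1) := (mW l).mp hw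
        have hA : l ∉ specA T := by
          intro hA
          have hp : l ∈ poles T := by rw [← hUW']; exact ⟨hA, hu⟩
          obtain ⟨-, hFA, hFD⟩ := (mP l).mp hp
          exact hnW (K7 l hUSW hFA hFD)
        exact ⟨(mS l).mpr (fun hunit => hnW (K2 l hunit)), hA⟩
      · rintro ⟨hs, hA⟩
        have hbb : boundedBelow (T - l • 1) := not_not.mp (fun h => hA ((mA l).mpr h))
        exact ⟨(mW l).mpr (fun hW => (mS l).mp hs (K4 l hW hbb)),
          fun hu => ((mU l).mp hu) (K1 l hbb)⟩
  have imp2 : (propZPia T ∧ specW T \ specUW T = spec T \ specA T) →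
      (propUWPi T ∧ lpoles T ∩ specUW T = ∅) := by
    rintro ⟨hZ, hse⟩
    have hZ' : spec T \ specW T = lpoles T := hZ
    constructor
    · show specA T \ specUW T = poles T
      ext l
      constructor
      · rintro ⟨hA, hu⟩
        have hUSW : isUSW (T - l • 1) := not_not.mp (fun h => hu ((mU l).mpr h))
        have hbbn : ¬ boundedBelow (T - l • 1) := (mA l).mp hA
        have hnw : l ∉ specW T := by
          intro hw
          have hmem : l ∈ spec T \ specA T := by rw [← hse]; exact ⟨hw, hu⟩
          exact hmem.2 hA
        have hW : isWeyl (T - l • 1) := not_not.mp (fun h => hnw ((mW l).mpr h))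
        have hs : l ∈ spec T := (mS l).mpr (fun hunit => hbbn (K5 l hunit))
        have hlp : l ∈ lpoles T := by rw [← hZ']; exact ⟨hs, hnw⟩
        obtain ⟨-, hLD⟩ := (mL l).mp hlp
        have hFA := K10 l hLD
        exact (mP l).mpr ⟨hs, hFA, K6 l hW hFA⟩
      · intro hp
        obtain ⟨hs, hFA, hFD⟩ := (mP l).mp hp
        have hA : l ∈ specA T := (mA l).mpr (fun hbb => (mS l).mp hs (K9 l hFA hFD hbb))
        have hLD := K8 l hFA hFD
        have hlp : l ∈ lpoles T := (mL l).mpr ⟨hA, hLD⟩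
        have hnw : l ∉ specW T := by
          have hmem : l ∈ spec T \ specW T := by rw [hZ']; exact hlp
          exact hmem.2
        have hW : isWeyl (T - l • 1) := not_not.mp (fun h => hnw ((mW l).mpr h))
        exact ⟨hA, fun hu => ((mU l).mp hu) (K3 l hW)⟩
    · show lpoles T ∩ specUW T = ∅
      rw [Set.eq_empty_iff_forall_notMem]
      intro l
      rintro ⟨hlp, hu⟩
      have hmem : l ∈ spec T \ specW T := by rw [hZ']; exact hlp
      have hW : isWeyl (T - l • 1) := not_not.mp (fun h => hmem.2 ((mW l).mpr h))
      exact ((mU l).mp hu) (K3 l hW)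
  have imp3 : (propZPia T ∧ specW T \ specUW T = spec T \ specA T) →
      (propZPia T ∧ (specA T \ specUW T) ∩ specW T = ∅) := by
    rintro ⟨hZ, hse⟩
    refine ⟨hZ, ?_⟩
    rw [Set.eq_empty_iff_forall_notMem]
    intro l
    rintro ⟨⟨hA, hu⟩, hw⟩
    have hmem : l ∈ spec T \ specA T := by rw [← hse]; exact ⟨hw, hu⟩
    exact hmem.2 hA
  have imp4 : (propZPia T ∧ (specA T \ specUW T) ∩ specW T = ∅) →
      (propZPia T ∧ specW T \ specUW T = spec T \ specA T) := by
    rintro ⟨hZ, hE⟩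
    have hZ' : spec T \ specW T = lpoles T := hZ
    refine ⟨hZ, ?_⟩
    ext l
    constructor
    · rintro ⟨hw, hu⟩
      have hA : l ∉ specA T := by
        intro hA
        exact Set.eq_empty_iff_forall_notMem.mp hE l ⟨⟨hA, hu⟩, hw⟩
      have hs : l ∈ spec T := (mS l).mpr (fun hunit => ((mW l).mp hw) (K2 l hunit))
      exact ⟨hs, hA⟩
    · rintro ⟨hs, hA⟩
      have hbb : boundedBelow (T - l • 1) := not_not.mp (fun h => hA ((mA l).mpr h))
      have hnw : l ∈ specW T := by
        by_contra hnw
        have hlp : l ∈ lpoles T := by rw [← hZ']; exact ⟨hs, hnw⟩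
        exact ((mA l).mp ((mL l).mp hlp).1) hbb
      exact ⟨hnw, fun hu => ((mU l).mp hu) (K1 l hbb)⟩
  exact ⟨⟨imp1, imp2⟩, ⟨imp3, imp4⟩⟩
end

section
/- If T satisfies property (Z_{Π_a}) and a-Browder's theorem, then T satisfies property (UW_Π). -/
open OpSpec Cardinal


section Stmt16AuxSec

open Cardinal

namespace Stmt16Aux

variable {X : Type*} [NormedAddCommGroup X] [NormedSpace ℂ X]


lemma mem_ker_clm (f : X →L[ℂ] X) (x : X) :
    x ∈ LinearMap.ker (f : X →ₗ[ℂ] X) ↔ f x = 0 := Iff.rfl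

lemma pow_succ_apply (S : X →L[ℂ] X) (n : ℕ) (x : X) :
    (S ^ (n + 1)) x = (S ^ n) (S x) := by
  rw [pow_succ]; rfl

lemma pow_succ_apply' (S : X →L[ℂ] X) (n : ℕ) (x : X) :
    (S ^ (n + 1)) x = S ((S ^ n) x) := by
  rw [pow_succ']; rfl

lemma ker_pow_le_succ (S : X →L[ℂ] X) (n : ℕ) :
    LinearMap.ker ((S ^ n : X →L[ℂ] X) : X →ₗ[ℂ] X) ≤ LinearMap.ker ((S ^ (n + 1) : X →L[ℂ] X) : X →ₗ[ℂ] X) := by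
  intro x hx
  rw [mem_ker_clm] at hx ⊢
  rw [pow_succ_apply', hx, map_zero]

lemma ker_stab (S : X →L[ℂ] X) (p : ℕ)
    (h : LinearMap.ker ((S ^ p : X →L[ℂ] X) : X →ₗ[ℂ] X) = LinearMap.ker ((S ^ (p + 1) : X →L[ℂ] X) : X →ₗ[ℂ] X)) :
    ∀ k, LinearMap.ker ((S ^ (p + k) : X →L[ℂ] X) : X →ₗ[ℂ] X) = LinearMap.ker ((S ^ (p + k + 1) : X →L[ℂ] X) : X →ₗ[ℂ] X) := by
  intro k; induction k with
  | zero => exact h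
  | succ k ih =>
    refine le_antisymm (ker_pow_le_succ _ _) ?_
    intro x hx
    rw [LinearMap.mem_ker] at hx ⊢
    have h1 : S x ∈ LinearMap.ker ((S ^ (p + k + 1) : X →L[ℂ] X) : X →ₗ[ℂ] X) := by
      rw [mem_ker_clm, ← pow_succ_apply]
      exact hx
    rw [← ih, LinearMap.mem_ker] at h1
    show (S ^ (p + k + 1)) x = 0
    rw [pow_succ_apply]
    exact h1

lemma ker_stab_all (S : X →L[ℂ] X) (p : ℕ)
    (h : LinearMap.ker ((S ^ p : X →L[ℂ] X) : X →ₗ[ℂ] X) = LinearMap.ker ((S ^ (p + 1) : X →L[ℂ] X) : X →ₗ[ℂ] X)) :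
    ∀ k, LinearMap.ker ((S ^ (p + k) : X →L[ℂ] X) : X →ₗ[ℂ] X) = LinearMap.ker ((S ^ p : X →L[ℂ] X) : X →ₗ[ℂ] X) := by
  intro k; induction k with
  | zero => rfl
  | succ k ih => rw [← ih]; exact (ker_stab S p h k).symm

lemma range_pow_succ (S : X →L[ℂ] X) (n : ℕ) :
    LinearMap.range ((S ^ (n + 1) : X →L[ℂ] X) : X →ₗ[ℂ] X) =
      Submodule.map (S : X →ₗ[ℂ] X) (LinearMap.range ((S ^ n : X →L[ℂ] X) : X →ₗ[ℂ] X)) := by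
  ext y
  simp only [LinearMap.mem_range, Submodule.mem_map, ContinuousLinearMap.coe_coe]
  constructor
  · rintro ⟨x, rfl⟩
    exact ⟨(S ^ n) x, ⟨x, rfl⟩, (pow_succ_apply' S n x).symm⟩
  · rintro ⟨_, ⟨x, rfl⟩, rfl⟩
    exact ⟨x, pow_succ_apply' S n x⟩

lemma range_pow_succ_le_range (S : X →L[ℂ] X) (n : ℕ) :
    LinearMap.range ((S ^ (n + 1) : X →L[ℂ] X) : X →ₗ[ℂ] X) ≤ LinearMap.range (S : X →ₗ[ℂ] X) := by
  rintro y ⟨x, rfl⟩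
  exact ⟨(S ^ n) x, (pow_succ_apply' S n x).symm⟩

lemma range_pow_succ_le (S : X →L[ℂ] X) (n : ℕ) :
    LinearMap.range ((S ^ (n + 1) : X →L[ℂ] X) : X →ₗ[ℂ] X) ≤ LinearMap.range ((S ^ n : X →L[ℂ] X) : X →ₗ[ℂ] X) := by
  rintro y ⟨x, rfl⟩
  exact ⟨S x, (pow_succ_apply S n x).symm⟩

lemma range_stab (S : X →L[ℂ] X) (q : ℕ)
    (h : LinearMap.range ((S ^ q : X →L[ℂ] X) : X →ₗ[ℂ] X) = LinearMap.range ((S ^ (q + 1) : X →L[ℂ] X) : X →ₗ[ℂ] X)) :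
    ∀ k, LinearMap.range ((S ^ (q + k) : X →L[ℂ] X) : X →ₗ[ℂ] X) = LinearMap.range ((S ^ q : X →L[ℂ] X) : X →ₗ[ℂ] X) := by
  intro k; induction k with
  | zero => rfl
  | succ k ih =>
    calc LinearMap.range ((S ^ (q + k + 1) : X →L[ℂ] X) : X →ₗ[ℂ] X)
        = Submodule.map (S : X →ₗ[ℂ] X) (LinearMap.range ((S ^ (q + k) : X →L[ℂ] X) : X →ₗ[ℂ] X)) :=
          range_pow_succ S (q + k)
      _ = Submodule.map (S : X →ₗ[ℂ] X) (LinearMap.range ((S ^ q : X →L[ℂ] X) : X →ₗ[ℂ] X)) := by rw [ih]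
      _ = LinearMap.range ((S ^ (q + 1) : X →L[ℂ] X) : X →ₗ[ℂ] X) := (range_pow_succ S q).symm
      _ = LinearMap.range ((S ^ q : X →L[ℂ] X) : X →ₗ[ℂ] X) := h.symm

lemma ker_pow_eq_bot (S : X →L[ℂ] X) (h : LinearMap.ker (S : X →ₗ[ℂ] X) = ⊥) (n : ℕ) :
    LinearMap.ker ((S ^ n : X →L[ℂ] X) : X →ₗ[ℂ] X) = ⊥ := by
  induction n with
  | zero =>
    rw [eq_bot_iff]; intro x hx
    rw [LinearMap.mem_ker, pow_zero] at hx
    exact hx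
  | succ n ih =>
    rw [eq_bot_iff]; intro x hx
    rw [mem_ker_clm, pow_succ_apply'] at hx
    have : (S ^ n) x ∈ LinearMap.ker (S : X →ₗ[ℂ] X) := hx
    rw [h, Submodule.mem_bot] at this
    have : x ∈ LinearMap.ker ((S ^ n : X →L[ℂ] X) : X →ₗ[ℂ] X) := this
    rwa [ih, Submodule.mem_bot] at this

lemma sbar_le (S : X →L[ℂ] X) (p : ℕ) :
    LinearMap.range ((S ^ p : X →L[ℂ] X) : X →ₗ[ℂ] X) ≤
      (LinearMap.range ((S ^ (p + 1) : X →L[ℂ] X) : X →ₗ[ℂ] X)).comap (S : X →ₗ[ℂ] X) := by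
  rintro x ⟨y, rfl⟩
  simp only [Submodule.mem_comap, ContinuousLinearMap.coe_coe, LinearMap.mem_range]
  exact ⟨y, pow_succ_apply' S p y⟩

noncomputable def Sbar (S : X →L[ℂ] X) (p : ℕ) :
    (X ⧸ LinearMap.range ((S ^ p : X →L[ℂ] X) : X →ₗ[ℂ] X)) →ₗ[ℂ] (X ⧸ LinearMap.range ((S ^ (p + 1) : X →L[ℂ] X) : X →ₗ[ℂ] X)) :=
  Submodule.mapQ _ _ (S : X →ₗ[ℂ] X) (sbar_le S p)

lemma Sbar_mk (S : X →L[ℂ] X) (p : ℕ) (x : X) :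
    Sbar S p (Submodule.Quotient.mk x) = Submodule.Quotient.mk (S x) := rfl

lemma rank_quot_succ (S : X →L[ℂ] X) (p : ℕ) :
    Module.rank ℂ (X ⧸ LinearMap.range ((S ^ (p + 1) : X →L[ℂ] X) : X →ₗ[ℂ] X))
      = Module.rank ℂ (X ⧸ LinearMap.range (S : X →ₗ[ℂ] X))
        + Module.rank ℂ (LinearMap.range (Sbar S p)) := by
  set A := LinearMap.range ((S ^ (p + 1) : X →L[ℂ] X) : X →ₗ[ℂ] X) with hA
  have hrange : LinearMap.range (Sbar S p) = Submodule.map A.mkQ (LinearMap.range (S : X →ₗ[ℂ] X)) := by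
    apply le_antisymm
    · rintro _ ⟨q, rfl⟩
      obtain ⟨x, rfl⟩ := Submodule.Quotient.mk_surjective _ q
      rw [Sbar_mk]
      exact ⟨S x, ⟨x, rfl⟩, rfl⟩
    · rintro _ ⟨y, ⟨x, rfl⟩, rfl⟩
      exact ⟨Submodule.Quotient.mk x, (Sbar_mk S p x).symm ▸ rfl⟩
  have e : ((X ⧸ A) ⧸ (LinearMap.range (Sbar S p))) ≃ₗ[ℂ] X ⧸ LinearMap.range (S : X →ₗ[ℂ] X) :=
    (Submodule.quotEquivOfEq _ _ hrange).trans
      ((Submodule.quotientQuotientEquivQuotientSup A (LinearMap.range (S : X →ₗ[ℂ] X))).trans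
        (Submodule.quotEquivOfEq _ _ (sup_eq_right.2 (range_pow_succ_le_range S p))))
  have h := Submodule.rank_quotient_add_rank (LinearMap.range (Sbar S p))
  rw [e.rank_eq] at h
  exact h.symm

lemma rank_ker_Sbar (S : X →L[ℂ] X) (p : ℕ)
    (hdisj : LinearMap.ker (S : X →ₗ[ℂ] X) ⊓ LinearMap.range ((S ^ p : X →L[ℂ] X) : X →ₗ[ℂ] X) = ⊥) :
    Module.rank ℂ (LinearMap.ker (Sbar S p)) = Module.rank ℂ (LinearMap.ker (S : X →ₗ[ℂ] X)) := by
  have hmem : ∀ x : LinearMap.ker (S : X →ₗ[ℂ] X),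
      (LinearMap.range ((S ^ p : X →L[ℂ] X) : X →ₗ[ℂ] X)).mkQ x ∈ LinearMap.ker (Sbar S p) := by
    intro x
    rw [LinearMap.mem_ker]
    show Sbar S p (Submodule.Quotient.mk (x : X)) = 0
    rw [Sbar_mk]
    have hx : S (x : X) = 0 := x.2
    rw [hx]
    exact Submodule.Quotient.mk_zero _
  let φ : LinearMap.ker (S : X →ₗ[ℂ] X) →ₗ[ℂ] LinearMap.ker (Sbar S p) :=
    LinearMap.codRestrict _ ((LinearMap.range ((S ^ p : X →L[ℂ] X) : X →ₗ[ℂ] X)).mkQ.comp (LinearMap.ker (S : X →ₗ[ℂ] X)).subtype) hmem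
  have hinj : Function.Injective φ := by
    intro x y hxy
    have h1 : (LinearMap.range ((S ^ p : X →L[ℂ] X) : X →ₗ[ℂ] X)).mkQ (x : X) = (LinearMap.range ((S ^ p : X →L[ℂ] X) : X →ₗ[ℂ] X)).mkQ (y : X) :=
      congrArg Subtype.val hxy
    have h2 : (x : X) - (y : X) ∈ LinearMap.range ((S ^ p : X →L[ℂ] X) : X →ₗ[ℂ] X) :=
      (Submodule.Quotient.eq _).1 h1
    have h3 : (x : X) - (y : X) ∈ LinearMap.ker (S : X →ₗ[ℂ] X) := sub_mem x.2 y.2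
    have h4 : (x : X) - (y : X) ∈ (⊥ : Submodule ℂ X) := hdisj ▸ ⟨h3, h2⟩
    rw [Submodule.mem_bot, sub_eq_zero] at h4
    exact Subtype.ext h4
  have hsurj : Function.Surjective φ := by
    rintro ⟨q, hq⟩
    obtain ⟨x, rfl⟩ := Submodule.Quotient.mk_surjective _ q
    rw [LinearMap.mem_ker] at hq
    rw [show Sbar S p (Submodule.Quotient.mk x) = Submodule.Quotient.mk (S x) from rfl] at hq
    have hq' : S x ∈ LinearMap.range ((S ^ (p + 1) : X →L[ℂ] X) : X →ₗ[ℂ] X) := (Submodule.Quotient.mk_eq_zero _).1 hq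
    obtain ⟨z, hz⟩ := hq'
    have hker : x - (S ^ p) z ∈ LinearMap.ker (S : X →ₗ[ℂ] X) := by
      rw [mem_ker_clm, map_sub, ← pow_succ_apply' S p z, show (S ^ (p + 1)) z = S x from hz, sub_self]
    refine ⟨⟨x - (S ^ p) z, hker⟩, ?_⟩
    apply Subtype.ext
    show (LinearMap.range ((S ^ p : X →L[ℂ] X) : X →ₗ[ℂ] X)).mkQ (x - (S ^ p) z) = Submodule.Quotient.mk x
    rw [Submodule.mkQ_apply, Submodule.Quotient.eq]
    simp only [sub_sub_cancel_left, neg_mem_iff]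
    exact ⟨z, rfl⟩
  exact (LinearEquiv.ofBijective φ ⟨hinj, hsurj⟩).rank_eq.symm

lemma rank_quot_pow_lt (S : X →L[ℂ] X)
    (hβ : Module.rank ℂ (X ⧸ LinearMap.range (S : X →ₗ[ℂ] X)) < ℵ₀) :
    ∀ n, Module.rank ℂ (X ⧸ LinearMap.range ((S ^ n : X →L[ℂ] X) : X →ₗ[ℂ] X)) < ℵ₀ := by
  intro n; induction n with
  | zero =>
    have htop : LinearMap.range (((S : X →L[ℂ] X) ^ 0 : X →L[ℂ] X) : X →ₗ[ℂ] X) = ⊤ := by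
      rw [pow_zero]
      exact LinearMap.range_eq_top.2 (fun x => ⟨x, rfl⟩)
    rw [htop]
    haveI : Subsingleton (X ⧸ (⊤ : Submodule ℂ X)) :=
      Submodule.Quotient.subsingleton_iff.2 rfl
    rw [rank_subsingleton' ℂ]
    exact aleph0_pos
  | succ n ih =>
    rw [rank_quot_succ S n]
    have h2 : Module.rank ℂ (LinearMap.range (Sbar S n))
        ≤ Module.rank ℂ (X ⧸ LinearMap.range ((S ^ n : X →L[ℂ] X) : X →ₗ[ℂ] X)) :=
      (self_le_add_right _ _).trans_eq (LinearMap.rank_range_add_rank_ker (Sbar S n))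
    exact add_lt_aleph0 hβ (h2.trans_lt ih)

lemma eq_of_le_of_rank_quotient_eq {A B : Submodule ℂ X} (h : A ≤ B)
    (hfin : Module.rank ℂ (X ⧸ A) < ℵ₀)
    (heq : Module.rank ℂ (X ⧸ A) = Module.rank ℂ (X ⧸ B)) : A = B := by
  have hq := Submodule.rank_quotient_add_rank (B.map A.mkQ)
  rw [(Submodule.quotientQuotientEquivQuotient A B h).rank_eq, ← heq] at hq
  have htfin : Module.rank ℂ (B.map A.mkQ) < ℵ₀ := by
    refine lt_of_le_of_lt ?_ hfin
    calc Module.rank ℂ (B.map A.mkQ)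
        ≤ Module.rank ℂ (X ⧸ A) + Module.rank ℂ (B.map A.mkQ) := le_add_self
      _ = Module.rank ℂ (X ⧸ A) := hq
  obtain ⟨a, ha⟩ := lt_aleph0.1 hfin
  obtain ⟨b, hb⟩ := lt_aleph0.1 htfin
  rw [ha, hb] at hq
  have hb0 : b = 0 := by
    have hab : a + b = a := by exact_mod_cast hq
    omega
  have hbot : B.map A.mkQ = ⊥ := Submodule.rank_eq_zero.1 (by rw [hb, hb0]; simp)
  have hBA : B ≤ A := by
    intro x hx
    have hx' : A.mkQ x ∈ B.map A.mkQ := ⟨x, hx, rfl⟩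
    rw [hbot, Submodule.mem_bot] at hx'
    rwa [Submodule.mkQ_apply, Submodule.Quotient.mk_eq_zero] at hx'
  exact le_antisymm h hBA

lemma range_succ_eq (S : X →L[ℂ] X) (p : ℕ)
    (hdisj : LinearMap.ker (S : X →ₗ[ℂ] X) ⊓ LinearMap.range ((S ^ p : X →L[ℂ] X) : X →ₗ[ℂ] X) = ⊥)
    (hαβ : Module.rank ℂ (LinearMap.ker (S : X →ₗ[ℂ] X)) = Module.rank ℂ (X ⧸ LinearMap.range (S : X →ₗ[ℂ] X)))
    (hβ : Module.rank ℂ (X ⧸ LinearMap.range (S : X →ₗ[ℂ] X)) < ℵ₀) :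
    LinearMap.range ((S ^ (p + 1) : X →L[ℂ] X) : X →ₗ[ℂ] X) = LinearMap.range ((S ^ p : X →L[ℂ] X) : X →ₗ[ℂ] X) := by
  have hfinB := rank_quot_pow_lt S hβ p
  have h1 := rank_quot_succ S p
  have h2 := LinearMap.rank_range_add_rank_ker (Sbar S p)
  have h3 := rank_ker_Sbar S p hdisj
  have heq : Module.rank ℂ (X ⧸ LinearMap.range ((S ^ (p + 1) : X →L[ℂ] X) : X →ₗ[ℂ] X))
      = Module.rank ℂ (X ⧸ LinearMap.range ((S ^ p : X →L[ℂ] X) : X →ₗ[ℂ] X)) := by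
    rw [h1, ← h2, h3, hαβ, add_comm]
  exact eq_of_le_of_rank_quotient_eq (range_pow_succ_le S p) (heq ▸ hfinB) heq

lemma isClosed_range_pow (S : X →L[ℂ] X) [CompleteSpace X] (n : ℕ)
    (hdisj : LinearMap.ker ((S ^ n : X →L[ℂ] X) : X →ₗ[ℂ] X) ⊓ LinearMap.range ((S ^ n : X →L[ℂ] X) : X →ₗ[ℂ] X) = ⊥)
    (hsum : LinearMap.ker ((S ^ n : X →L[ℂ] X) : X →ₗ[ℂ] X) ⊔ LinearMap.range ((S ^ n : X →L[ℂ] X) : X →ₗ[ℂ] X) = ⊤) :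
    IsClosed ((LinearMap.range ((S ^ n : X →L[ℂ] X) : X →ₗ[ℂ] X) : Submodule ℂ X) : Set X) := by
  set N := LinearMap.ker ((S ^ n : X →L[ℂ] X) : X →ₗ[ℂ] X) with hN
  set Y := LinearMap.range ((S ^ n : X →L[ℂ] X) : X →ₗ[ℂ] X) with hY
  have hNclosed : IsClosed (N : Set X) := ContinuousLinearMap.isClosed_ker (S ^ n)
  haveI : CompleteSpace N := hNclosed.completeSpace_coe
  let Φ : (N × X) →L[ℂ] X := N.subtypeL.coprod (S ^ n)
  have hsurj : Function.Surjective Φ := by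
    intro y
    have hy : y ∈ N ⊔ Y := hsum.symm ▸ Submodule.mem_top
    obtain ⟨a, ha, b, hb, rfl⟩ := Submodule.mem_sup.1 hy
    obtain ⟨x, rfl⟩ := hb
    exact ⟨(⟨a, ha⟩, x), rfl⟩
  obtain ⟨C, hC, hCbound⟩ := Φ.exists_preimage_norm_le hsurj
  let f : NormedAddGroupHom X X :=
    AddMonoidHom.mkNormedAddGroupHom (S ^ n).toLinearMap.toAddMonoidHom ‖S ^ n‖
      (fun v => (S ^ n).le_opNorm v)
  have key : f.SurjectiveOnWith Y.toAddSubgroup C := by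
    intro y hy
    obtain ⟨⟨a, x⟩, hax, hnorm⟩ := hCbound y
    have hax' : (a : X) + (S ^ n) x = y := hax
    have haY : (a : X) ∈ Y := by
      have h1 : (a : X) = y - (S ^ n) x := by rw [← hax']; abel
      rw [h1]
      exact sub_mem hy ⟨x, rfl⟩
    have ha0 : (a : X) = 0 := by
      have : (a : X) ∈ N ⊓ Y := ⟨a.2, haY⟩
      rw [hdisj, Submodule.mem_bot] at this
      exact this
    refine ⟨x, ?_, ?_⟩
    · show (S ^ n) x = y
      rw [← hax', ha0, zero_add]
    · have hx2 : ‖x‖ ≤ ‖((a, x) : N × X)‖ := by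
        rw [Prod.norm_def]
        exact le_max_right _ _
      exact hx2.trans hnorm
  have hclosure := controlled_closure_of_complete hC one_pos key
  apply isClosed_of_closure_subset
  intro y hy
  have hy' : y ∈ Y.toAddSubgroup.topologicalClosure := hy
  obtain ⟨g, hg, -⟩ := hclosure y hy'
  exact hg ▸ ⟨g, rfl⟩

lemma not_unit_sub_smul {T : X →L[ℂ] X} [CompleteSpace X] {l : ℂ}
    (hl : l ∈ spectrum ℂ T) :
    ¬ Function.Bijective (T - l • (1 : X →L[ℂ] X)) := by
  intro hbij
  have hunit : IsUnit (T - l • (1 : X →L[ℂ] X)) :=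
    ContinuousLinearMap.isUnit_iff_bijective.2 hbij
  have : IsUnit ((algebraMap ℂ (X →L[ℂ] X)) l - T) := by
    have heq : (algebraMap ℂ (X →L[ℂ] X)) l - T = -(T - l • (1 : X →L[ℂ] X)) := by
      rw [Algebra.algebraMap_eq_smul_one]; abel
    rw [heq]
    exact hunit.neg
  exact spectrum.mem_iff.1 hl this


end Stmt16Aux

end Stmt16AuxSec

theorem stmt16 {X : Type*} [NormedAddCommGroup X] [NormedSpace ℂ X] [CompleteSpace X]
    (hX : ¬ FiniteDimensional ℂ X) (T : X →L[ℂ] X)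
    (h1 : propZPia T) (h2 : aBrowder T) : propUWPi T := by
  have h1' : spec T \ specW T = lpoles T := h1
  have h2' : specA T \ specUW T = lpoles0 T := h2
  show specA T \ specUW T = poles T
  rw [h2']
  ext l
  constructor
  · rintro ⟨hlp, hα⟩
    have hmem : l ∈ spec T \ specW T := by rw [h1']; exact hlp
    obtain ⟨hspec, hW⟩ := hmem
    have hWeyl : isWeyl (T - l • 1) := of_not_not hW
    obtain ⟨hαfin, hβfin, hcl, hαβ⟩ := hWeyl
    obtain ⟨hsa, p, hker, hclr⟩ := hlp
    refine ⟨hspec, ⟨p, hker⟩, ⟨p, ?_⟩⟩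
    have hdisj : LinearMap.ker ((T - l • (1 : X →L[ℂ] X) : X →L[ℂ] X) : X →ₗ[ℂ] X) ⊓
        LinearMap.range (((T - l • (1 : X →L[ℂ] X)) ^ p : X →L[ℂ] X) : X →ₗ[ℂ] X) = ⊥ := by
      rw [eq_bot_iff]
      rintro x hx
      obtain ⟨hx1, hx2⟩ := Submodule.mem_inf.1 hx
      obtain ⟨y, rfl⟩ := hx2
      rw [LinearMap.mem_ker] at hx1
      have hy : y ∈ LinearMap.ker (((T - l • (1 : X →L[ℂ] X)) ^ (p + 1) : X →L[ℂ] X) : X →ₗ[ℂ] X) := by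
        rw [Stmt16Aux.mem_ker_clm, Stmt16Aux.pow_succ_apply']
        exact hx1
      rw [← hker, LinearMap.mem_ker] at hy
      rw [Submodule.mem_bot]
      exact hy
    exact (Stmt16Aux.range_succ_eq (T - l • 1) p hdisj hαβ hβfin).symm
  · rintro ⟨hspec, ⟨p, hkp⟩, ⟨q, hrq⟩⟩
    set S := T - l • (1 : X →L[ℂ] X) with hSdef
    have hkAll : ∀ k, p ≤ k → LinearMap.ker ((S ^ k : X →L[ℂ] X) : X →ₗ[ℂ] X) = LinearMap.ker ((S ^ p : X →L[ℂ] X) : X →ₗ[ℂ] X) := by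
      intro k hk
      have h := Stmt16Aux.ker_stab_all S p hkp (k - p)
      rwa [Nat.add_sub_cancel' hk] at h
    have hrAll : ∀ k, q ≤ k → LinearMap.range ((S ^ k : X →L[ℂ] X) : X →ₗ[ℂ] X) = LinearMap.range ((S ^ q : X →L[ℂ] X) : X →ₗ[ℂ] X) := by
      intro k hk
      have h := Stmt16Aux.range_stab S q hrq (k - q)
      rwa [Nat.add_sub_cancel' hk] at h
    set n := max p q + 1 with hn
    have hpn : p ≤ n := (le_max_left p q).trans (Nat.le_succ _)
    have hqn : q ≤ n := (le_max_right p q).trans (Nat.le_succ _)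
    have hkn : LinearMap.ker ((S ^ n : X →L[ℂ] X) : X →ₗ[ℂ] X) = LinearMap.ker ((S ^ (n + 1) : X →L[ℂ] X) : X →ₗ[ℂ] X) := by
      rw [hkAll n hpn, hkAll (n + 1) (hpn.trans (Nat.le_succ _))]
    have hrn : LinearMap.range ((S ^ n : X →L[ℂ] X) : X →ₗ[ℂ] X) = LinearMap.range ((S ^ (n + 1) : X →L[ℂ] X) : X →ₗ[ℂ] X) := by
      rw [hrAll n hqn, hrAll (n + 1) (hqn.trans (Nat.le_succ _))]
    have pow_add_apply : ∀ x : X, (S ^ (n + n)) x = (S ^ n) ((S ^ n) x) := by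
      intro x
      rw [pow_add]
      rfl
    have hdisjN : LinearMap.ker ((S ^ n : X →L[ℂ] X) : X →ₗ[ℂ] X) ⊓ LinearMap.range ((S ^ n : X →L[ℂ] X) : X →ₗ[ℂ] X) = ⊥ := by
      rw [eq_bot_iff]
      rintro x hx
      obtain ⟨hx1, hx2⟩ := Submodule.mem_inf.1 hx
      obtain ⟨y, rfl⟩ := hx2
      rw [LinearMap.mem_ker] at hx1
      have hy : y ∈ LinearMap.ker ((S ^ (n + n) : X →L[ℂ] X) : X →ₗ[ℂ] X) := by
        rw [Stmt16Aux.mem_ker_clm, pow_add_apply]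
        exact hx1
      rw [hkAll (n + n) (hpn.trans (Nat.le_add_right n n)), ← hkAll n hpn,
        LinearMap.mem_ker] at hy
      rw [Submodule.mem_bot]
      exact hy
    have hsumN : LinearMap.ker ((S ^ n : X →L[ℂ] X) : X →ₗ[ℂ] X) ⊔ LinearMap.range ((S ^ n : X →L[ℂ] X) : X →ₗ[ℂ] X) = ⊤ := by
      rw [eq_top_iff]
      intro x _
      have hx : (S ^ n) x ∈ LinearMap.range ((S ^ (n + n) : X →L[ℂ] X) : X →ₗ[ℂ] X) := by
        rw [hrAll (n + n) (hqn.trans (Nat.le_add_right n n)), ← hrAll n hqn]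
        exact ⟨x, rfl⟩
      obtain ⟨y, hy⟩ := hx
      refine Submodule.mem_sup.2 ⟨x - (S ^ n) y, ?_, (S ^ n) y, ⟨y, rfl⟩, by abel⟩
      rw [Stmt16Aux.mem_ker_clm, map_sub, ← pow_add_apply, show (S ^ (n + n)) y = (S ^ n) x from hy, sub_self]
    have hYclosed := Stmt16Aux.isClosed_range_pow S n hdisjN hsumN
    have hLD : isLD S := by
      refine ⟨n, hkn, ?_⟩
      rw [← hrn]
      exact hYclosed
    have hsa : l ∈ specA T := by
      intro hbb
      obtain ⟨c, hc, hb⟩ := hbb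
      have hker0 : LinearMap.ker (S : X →ₗ[ℂ] X) = ⊥ := by
        rw [eq_bot_iff]
        intro x hx
        rw [LinearMap.mem_ker] at hx
        have hbx := hb x
        rw [show S x = 0 from hx, norm_zero] at hbx
        have hxn : ‖x‖ ≤ 0 := by nlinarith [norm_nonneg x]
        rw [Submodule.mem_bot]
        exact norm_le_zero_iff.1 hxn
      have hkerN : LinearMap.ker ((S ^ n : X →L[ℂ] X) : X →ₗ[ℂ] X) = ⊥ := Stmt16Aux.ker_pow_eq_bot S hker0 n
      have hrtop : LinearMap.range ((S ^ n : X →L[ℂ] X) : X →ₗ[ℂ] X) = ⊤ := by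
        rw [← hsumN, hkerN, bot_sup_eq]
      have hrS : LinearMap.range (S : X →ₗ[ℂ] X) = ⊤ :=
        eq_top_iff.2 (hrtop ▸ Stmt16Aux.range_pow_succ_le_range S (max p q))
      have hbij : Function.Bijective S :=
        ⟨(LinearMap.ker_eq_bot (f := (S : X →ₗ[ℂ] X))).1 hker0,
          LinearMap.range_eq_top.1 hrS⟩
      exact Stmt16Aux.not_unit_sub_smul hspec hbij
    have hlp : l ∈ lpoles T := ⟨hsa, hLD⟩
    have hmem : l ∈ spec T \ specW T := by rw [h1']; exact hlp
    have hWeyl : isWeyl S := of_not_not hmem.2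
    exact ⟨hlp, hWeyl.1⟩
end
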